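/- arXiv:2105.07941 — 13 statements merged into one kernel-verified Lean document; each statement's English description precedes it below -/
import Mathlib

section
/- Let R be a commutative ring, S a multiplicative subset of R, and 0 → L →f M →g N → 0 a u-S-exact sequence of R-modules. Then M is u-S-torsion if and only if both L and N are u-S-torsion. -/
universe u v

/-- An `R`-module `T` is `u`-`S`-torsion if there exists `s ∈ S` with `s • T = 0`. -/
def IsUSTorsion {R : Type u} [CommRing R] (S : Submonoid R)
    (M : Type v) [AddCommGroup M] [Module R M] : Prop :=
  ∃ s ∈ S, ∀ m : M, s • m = 0

/-- A sequence `A →f B →g C` of `R`-modules is `u`-`S`-exact at `B` if there is `s ∈ S`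
with `s • ker g ⊆ im f` and `s • im f ⊆ ker g`. -/
def IsUSExactAt {R : Type u} [CommRing R] (S : Submonoid R)
    {A B C : Type*} [AddCommGroup A] [AddCommGroup B] [AddCommGroup C]
    [Module R A] [Module R B] [Module R C]
    (f : A →ₗ[R] B) (g : B →ₗ[R] C) : Prop :=
  ∃ s ∈ S, (∀ b ∈ LinearMap.ker g, s • b ∈ LinearMap.range f) ∧
    (∀ b ∈ LinearMap.range f, s • b ∈ LinearMap.ker g)

/-- `0 → A →f B →g C → 0` is a `u`-`S`-exact sequence: `ker f` and `coker g` are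
`u`-`S`-torsion and the sequence is `u`-`S`-exact at `B`. -/
def IsUSShortExact {R : Type u} [CommRing R] (S : Submonoid R)
    {A B C : Type*} [AddCommGroup A] [AddCommGroup B] [AddCommGroup C]
    [Module R A] [Module R B] [Module R C]
    (f : A →ₗ[R] B) (g : B →ₗ[R] C) : Prop :=
  (∃ s ∈ S, ∀ a ∈ LinearMap.ker f, s • a = 0) ∧
    (∃ s ∈ S, ∀ c : C, s • c ∈ LinearMap.range g) ∧
    IsUSExactAt S f g

/-- For a `u`-`S`-exact sequence `0 → L →f M →g N → 0`, the module `M` is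
`u`-`S`-torsion if and only if both `L` and `N` are `u`-`S`-torsion. -/
theorem isUSTorsion_middle_iff {R : Type u} [CommRing R] (S : Submonoid R)
    {L M N : Type v} [AddCommGroup L] [AddCommGroup M] [AddCommGroup N]
    [Module R L] [Module R M] [Module R N]
    (f : L →ₗ[R] M) (g : M →ₗ[R] N) (h : IsUSShortExact S f g) :
    IsUSTorsion S M ↔ IsUSTorsion S L ∧ IsUSTorsion S N := by
  obtain ⟨⟨sf, hsf, hker⟩, ⟨sc, hsc, hcoker⟩, ⟨se, hse, hex1, hex2⟩⟩ := h
  constructor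
  · rintro ⟨s, hs, hsm⟩
    constructor
    · refine ⟨sf * s, S.mul_mem hsf hs, fun a => ?_⟩
      have : s • a ∈ LinearMap.ker f := by
        simp [LinearMap.mem_ker, map_smul, hsm (f a)]
      have := hker _ this
      rw [mul_smul]; exact this
    · refine ⟨s * sc, S.mul_mem hs hsc, fun n => ?_⟩
      obtain ⟨m, hm⟩ := hcoker n
      rw [mul_smul, ← hm, ← map_smul, hsm m, map_zero]
  · rintro ⟨⟨sL, hsL, hL⟩, ⟨sN, hsN, hN⟩⟩
    refine ⟨sL * (se * sN), S.mul_mem hsL (S.mul_mem hse hsN), fun m => ?_⟩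
    have hk : sN • m ∈ LinearMap.ker g := by
      simp [LinearMap.mem_ker, map_smul, hN (g m)]
    obtain ⟨a, ha⟩ := hex1 _ hk
    rw [mul_smul, mul_smul, ← ha, ← map_smul, hL a, map_zero]
end

section
/- Let R be a commutative ring, S a multiplicative subset of R, and 0 → L →f M →g N → 0 a u-S-exact sequence of R-modules. If L and N are S-finite, then M is S-finite. -/
universe u v

/-- An `R`-module `M` is `S`-finite if `s • M ⊆ N` for some `s ∈ S` and some finitely
generated submodule `N` of `M`. -/
def IsSFinite {R : Type u} [CommRing R] (S : Submonoid R)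
    (M : Type v) [AddCommGroup M] [Module R M] : Prop :=
  ∃ s ∈ S, ∃ N : Submodule R M, N.FG ∧ ∀ m : M, s • m ∈ N

/-- For a `u`-`S`-exact sequence `0 → L →f M →g N → 0`, if `L` and `N` are `S`-finite,
then so is `M`. -/
theorem isSFinite_middle {R : Type u} [CommRing R] (S : Submonoid R)
    {L M N : Type v} [AddCommGroup L] [AddCommGroup M] [AddCommGroup N]
    [Module R L] [Module R M] [Module R N]
    (f : L →ₗ[R] M) (g : M →ₗ[R] N) (h : IsUSShortExact S f g)
    (hL : IsSFinite S L) (hN : IsSFinite S N) : IsSFinite S M := by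
  obtain ⟨-, ⟨s2, hs2S, hs2⟩, ⟨s3, hs3S, hs3, -⟩⟩ := h
  obtain ⟨sL, hsLS, P, hPfg, hP⟩ := hL
  obtain ⟨sN, hsNS, Q, hQfg, hQ⟩ := hN
  obtain ⟨T, hT⟩ := hQfg
  choose lft hlft using hs2
  set K : Submodule R M := Submodule.map f P ⊔ Submodule.span R (lft '' ↑T) with hK
  have hKfg : K.FG := Submodule.FG.sup (hPfg.map f)
    (Submodule.fg_span (T.finite_toSet.image lft))
  have claim : ∀ n ∈ Q, ∃ x ∈ Submodule.span R (lft '' ↑T), g x = s2 • n := by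
    rw [← hT]
    intro n hn
    induction hn using Submodule.span_induction with
    | mem q hq =>
      exact ⟨lft q, Submodule.subset_span ⟨q, hq, rfl⟩, hlft q⟩
    | zero => exact ⟨0, Submodule.zero_mem _, by simp⟩
    | add a b _ _ ha hb =>
      obtain ⟨x, hx, hgx⟩ := ha
      obtain ⟨y, hy, hgy⟩ := hb
      exact ⟨x + y, Submodule.add_mem _ hx hy, by simp [hgx, hgy, smul_add]⟩
    | smul r a _ ha =>
      obtain ⟨x, hx, hgx⟩ := ha
      exact ⟨r • x, Submodule.smul_mem _ r hx, by
        simp [map_smul, hgx, smul_comm r s2]⟩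
  refine ⟨sL * s3 * s2 * sN, S.mul_mem (S.mul_mem (S.mul_mem hsLS hs3S) hs2S) hsNS,
    K, hKfg, fun m0 => ?_⟩
  obtain ⟨x, hxspan, hgx⟩ := claim _ (hQ (g m0))
  have hker : s2 • sN • m0 - x ∈ LinearMap.ker g := by
    simp only [LinearMap.mem_ker, map_sub, map_smul, hgx, sub_self]
  obtain ⟨l, hl⟩ := hs3 _ hker
  have h1 : sL • s3 • (s2 • sN • m0 - x) ∈ Submodule.map f P := by
    refine ⟨sL • l, hP l, ?_⟩
    rw [map_smul, hl]
  have h2 : sL • s3 • x ∈ Submodule.span R (lft '' ↑T) :=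
    Submodule.smul_mem _ _ (Submodule.smul_mem _ _ hxspan)
  have : (sL * s3 * s2 * sN) • m0
      = sL • s3 • (s2 • sN • m0 - x) + sL • s3 • x := by
    simp [smul_sub, mul_smul]
  rw [this]
  exact K.add_mem (le_sup_left (α := Submodule R M) h1)
    (le_sup_right (α := Submodule R M) h2)
end

section
/- Let R be a commutative ring, S a multiplicative subset of R, M an S-finite R-module, and f : M → N an R-homomorphism whose cokernel is u-S-torsion (a u-S-epimorphism). Then N is S-finite. -/
universe u v

/-- If `M` is `S`-finite and `f : M → N` is a `u`-`S`-epimorphism (i.e. its cokernel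
is `u`-`S`-torsion), then `N` is `S`-finite. -/
theorem isSFinite_of_uSEpi {R : Type u} [CommRing R] (S : Submonoid R)
    {M N : Type v} [AddCommGroup M] [AddCommGroup N] [Module R M] [Module R N]
    (f : M →ₗ[R] N) (hf : ∃ s ∈ S, ∀ n : N, s • n ∈ LinearMap.range f)
    (hM : IsSFinite S M) : IsSFinite S N := by
  obtain ⟨s, hs, K, hK, hKm⟩ := hM
  obtain ⟨t, ht, hft⟩ := hf
  refine ⟨s * t, S.mul_mem hs ht, K.map f, hK.map f, fun n => ?_⟩
  obtain ⟨m, hm⟩ := hft n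
  rw [mul_smul, ← hm, ← f.map_smul]
  exact Submodule.mem_map_of_mem (hKm m)
end

section
/- Let R be a commutative ring, S a multiplicative subset of R, and 0 → A → B → C → 0 a pure exact sequence of R-modules (i.e., a short exact sequence that remains exact after tensoring with every R-module). If B is u-S-flat, then C is u-S-flat. -/
universe u v

/-- An `R`-module `F` is `u`-`S`-flat if for every `u`-`S`-exact sequence
`0 → A → B → C → 0` the induced sequence `0 → A ⊗ F → B ⊗ F → C ⊗ F → 0` is
`u`-`S`-exact. -/
def IsUSFlat {R : Type u} [CommRing R] (S : Submonoid R)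
    (F : Type v) [AddCommGroup F] [Module R F] : Prop :=
  ∀ (A B C : Type v) [AddCommGroup A] [AddCommGroup B] [AddCommGroup C]
    [Module R A] [Module R B] [Module R C]
    (f : A →ₗ[R] B) (g : B →ₗ[R] C),
    IsUSShortExact S f g →
    IsUSShortExact S (LinearMap.rTensor F f) (LinearMap.rTensor F g)


open LinearMap TensorProduct

/-- Tensoring a u-S-surjective map stays u-S-surjective. -/
lemma aux_uS_surj {R : Type*} [CommRing R] {Y Z M : Type*}
    [AddCommGroup Y] [AddCommGroup Z] [AddCommGroup M]
    [Module R Y] [Module R Z] [Module R M]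
    (ψ : Y →ₗ[R] Z) (s : R) (h : ∀ z : Z, s • z ∈ LinearMap.range ψ) :
    ∀ w : Z ⊗[R] M, s • w ∈ LinearMap.range (LinearMap.rTensor M ψ) := by
  intro w
  induction w using TensorProduct.induction_on with
  | zero => rw [smul_zero]; exact Submodule.zero_mem _
  | tmul z m =>
    obtain ⟨y, hy⟩ := h z
    exact ⟨y ⊗ₜ m, by rw [rTensor_tmul, hy, smul_tmul']⟩
  | add x y hx hy => rw [smul_add]; exact Submodule.add_mem _ hx hy

/-- u-S right exactness of the tensor product. -/
lemma aux_uS_rexact {R : Type*} [CommRing R] {X Y Z M : Type*}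
    [AddCommGroup X] [AddCommGroup Y] [AddCommGroup Z] [AddCommGroup M]
    [Module R X] [Module R Y] [Module R Z] [Module R M]
    (φ : X →ₗ[R] Y) (ψ : Y →ₗ[R] Z) (se sc : R)
    (h1 : ∀ y ∈ LinearMap.ker ψ, se • y ∈ LinearMap.range φ)
    (h2 : ∀ y ∈ LinearMap.range φ, se • y ∈ LinearMap.ker ψ)
    (hc : ∀ z : Z, sc • z ∈ LinearMap.range ψ) :
    ∀ w ∈ LinearMap.ker (LinearMap.rTensor M ψ),
      (sc * se * se) • w ∈ LinearMap.range (LinearMap.rTensor M φ) := by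
  set Q := Y ⧸ LinearMap.range φ
  set p : Y →ₗ[R] Q := Submodule.mkQ (LinearMap.range φ)
  have key : ∀ y y' : Y, ψ y = ψ y' → p (se • y) = p (se • y') := by
    intro y y' hyy
    have : y - y' ∈ LinearMap.ker ψ := by
      rw [LinearMap.mem_ker, map_sub, hyy, sub_self]
    have hr := h1 _ this
    rw [smul_sub] at hr
    have : p (se • y - se • y') = 0 := (Submodule.Quotient.mk_eq_zero _).mpr hr
    rw [map_sub, sub_eq_zero] at this
    exact this
  choose σ hσ using hc
  have key2 : ∀ (y : Y) (z : Z), ψ y = sc • z → p (se • y) = p (se • σ z) :=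
    fun y z hy => key _ _ (by rw [hy, hσ])
  set θ : Z →ₗ[R] Q :=
    { toFun := fun z => p (se • σ z)
      map_add' := by
        intro z1 z2
        rw [← map_add, ← smul_add]
        exact (key2 (σ z1 + σ z2) (z1 + z2) (by rw [map_add, hσ, hσ, smul_add])).symm
      map_smul' := by
        intro r z
        simp only [RingHom.id_apply]
        rw [← map_smul, smul_comm r se]
        exact (key2 (r • σ z) (r • z) (by rw [map_smul, hσ, smul_comm])).symm } with hθ
  have hrange : LinearMap.range φ ≤ LinearMap.ker (se • ψ) := by
    rintro y hy
    have := h2 y hy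
    rw [LinearMap.mem_ker] at this ⊢
    rw [LinearMap.smul_apply, ← map_smul, this]
  set ψ' : Q →ₗ[R] Z := Submodule.liftQ _ (se • ψ) hrange with hψ'
  have hψ'p : ψ' ∘ₗ p = se • ψ := Submodule.liftQ_mkQ _ _ _
  have hcomp : θ ∘ₗ ψ' ∘ₗ p = (sc * se * se) • p := by
    ext y
    simp only [LinearMap.comp_apply, LinearMap.smul_apply]
    have h1' : ψ' (p y) = se • ψ y := by
      rw [← LinearMap.comp_apply, hψ'p, LinearMap.smul_apply]
    rw [h1', hθ]
    simp only [LinearMap.coe_mk, AddHom.coe_mk]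
    have := (key2 ((sc * se) • y) (se • ψ y) (by rw [map_smul, smul_smul, mul_comm sc se, mul_smul])).symm
    rw [this, smul_smul, map_smul]
    congr 1
    ring
  intro w hw
  rw [LinearMap.mem_ker] at hw
  have hex : Function.Exact (LinearMap.rTensor M φ) (LinearMap.rTensor M p) :=
    rTensor_exact M (LinearMap.exact_map_mkQ_range φ) (Submodule.mkQ_surjective _)
  have hz : LinearMap.rTensor M p ((sc * se * se) • w) = 0 := by
    have e1 : LinearMap.rTensor M ψ' (LinearMap.rTensor M p w) = 0 := by
      rw [← LinearMap.comp_apply, ← LinearMap.rTensor_comp, hψ'p,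
        LinearMap.rTensor_smul, LinearMap.smul_apply, hw, smul_zero]
    have e2 := congrArg (LinearMap.rTensor M) hcomp
    rw [LinearMap.rTensor_comp, LinearMap.rTensor_comp, LinearMap.rTensor_smul] at e2
    have e3 := LinearMap.congr_fun e2 w
    simp only [LinearMap.comp_apply, LinearMap.smul_apply] at e3
    rw [e1, map_zero] at e3
    rw [map_smul, ← e3]
  exact hex ((sc * se * se) • w) |>.mp hz

/-- If `0 → A →f B →g C → 0` is a pure exact sequence of `R`-modules (a short exact
sequence that remains exact after tensoring with every `R`-module) and `B` is
`u`-`S`-flat, then `C` is `u`-`S`-flat. -/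
theorem isUSFlat_of_pure_quotient {R : Type u} [CommRing R] (S : Submonoid R)
    {A B C : Type v} [AddCommGroup A] [AddCommGroup B] [AddCommGroup C]
    [Module R A] [Module R B] [Module R C]
    (f : A →ₗ[R] B) (g : B →ₗ[R] C)
    (hinj : Function.Injective f) (hsurj : Function.Surjective g)
    (hexact : Function.Exact f g)
    (hpure : ∀ (M : Type v) [AddCommGroup M] [Module R M],
      Function.Injective (LinearMap.lTensor M f) ∧
        Function.Surjective (LinearMap.lTensor M g) ∧
        Function.Exact (LinearMap.lTensor M f) (LinearMap.lTensor M g))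
    (hB : IsUSFlat S B) : IsUSFlat S C := by
  intro X Y Z _ _ _ _ _ _ φ ψ hSE
  obtain ⟨hk, ⟨sc, hscS, hsc⟩, ⟨se, hseS, hse1, hse2⟩⟩ := hSE
  obtain ⟨⟨sk', hsk'S, hsk'⟩, ⟨sc', hsc'S, hsc'⟩, ⟨se', hse'S, hse1', hse2'⟩⟩ :=
    hB X Y Z φ ψ ⟨hk, ⟨sc, hscS, hsc⟩, ⟨se, hseS, hse1, hse2⟩⟩
  -- naturality squares
  have N1 : (LinearMap.lTensor Y g) ∘ₗ (LinearMap.rTensor B φ)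
      = (LinearMap.rTensor C φ) ∘ₗ (LinearMap.lTensor X g) := by
    rw [LinearMap.lTensor_comp_rTensor, LinearMap.rTensor_comp_lTensor]
  have N2 : (LinearMap.lTensor Z g) ∘ₗ (LinearMap.rTensor B ψ)
      = (LinearMap.rTensor C ψ) ∘ₗ (LinearMap.lTensor Y g) := by
    rw [LinearMap.lTensor_comp_rTensor, LinearMap.rTensor_comp_lTensor]
  have N3 : (LinearMap.lTensor Y f) ∘ₗ (LinearMap.rTensor A φ)
      = (LinearMap.rTensor B φ) ∘ₗ (LinearMap.lTensor X f) := by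
    rw [LinearMap.lTensor_comp_rTensor, LinearMap.rTensor_comp_lTensor]
  have N4 : (LinearMap.lTensor Z f) ∘ₗ (LinearMap.rTensor A ψ)
      = (LinearMap.rTensor B ψ) ∘ₗ (LinearMap.lTensor Y f) := by
    rw [LinearMap.lTensor_comp_rTensor, LinearMap.rTensor_comp_lTensor]
  refine ⟨⟨sk' * (sc * se * se * se'),
      mul_mem hsk'S (mul_mem (mul_mem (mul_mem hscS hseS) hseS) hse'S), ?_⟩,
      ⟨sc', hsc'S, ?_⟩, ⟨se' * sc, mul_mem hse'S hscS, ?_, ?_⟩⟩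
  · -- kernel of rTensor C φ is torsion
    intro a ha
    rw [LinearMap.mem_ker] at ha
    obtain ⟨aa, haa⟩ := (hpure X).2.1 a
    have h1 : (LinearMap.lTensor Y g) ((LinearMap.rTensor B φ) aa) = 0 := by
      rw [← LinearMap.comp_apply, N1, LinearMap.comp_apply, haa, ha]
    obtain ⟨v, hv⟩ := ((hpure Y).2.2 _).mp h1
    have h2 : (LinearMap.rTensor A ψ) (se' • v) = 0 := by
      apply (hpure Z).1
      rw [map_zero, map_smul, map_smul, ← LinearMap.comp_apply, N4, LinearMap.comp_apply, hv,
        ← map_smul]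
      have := hse2' _ ⟨aa, rfl⟩
      rwa [LinearMap.mem_ker] at this
    obtain ⟨x, hx⟩ := aux_uS_rexact φ ψ se sc hse1 hse2 hsc (se' • v)
      (by rwa [LinearMap.mem_ker])
    have h4 : (LinearMap.rTensor B φ) ((sc * se * se * se') • aa - (LinearMap.lTensor X f) x)
        = 0 := by
      rw [map_sub, map_smul, ← hv, ← LinearMap.comp_apply, ← N3, LinearMap.comp_apply, hx,
        smul_smul, map_smul, sub_self]
    have h5 := hsk' _ (by rwa [LinearMap.mem_ker])
    have h6 := congrArg (LinearMap.lTensor X g) h5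
    rw [map_zero, map_smul, map_sub, map_smul, haa,
      Function.Exact.apply_apply_eq_zero (hpure X).2.2 x, sub_zero, ← mul_smul] at h6
    exact h6
  · -- u-S-surjectivity of rTensor C ψ
    intro z
    obtain ⟨zz, hzz⟩ := (hpure Z).2.1 z
    obtain ⟨y, hy⟩ := hsc' zz
    refine ⟨(LinearMap.lTensor Y g) y, ?_⟩
    rw [← LinearMap.comp_apply, ← N2, LinearMap.comp_apply, hy, map_smul, hzz]
  · -- ker ⊆ (u-S) range at Y ⊗ C
    intro b hb
    rw [LinearMap.mem_ker] at hb
    obtain ⟨bb, hbb⟩ := (hpure Y).2.1 b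
    have h1 : (LinearMap.lTensor Z g) ((LinearMap.rTensor B ψ) bb) = 0 := by
      rw [← LinearMap.comp_apply, N2, LinearMap.comp_apply, hbb, hb]
    obtain ⟨w, hw⟩ := ((hpure Z).2.2 _).mp h1
    obtain ⟨v, hv⟩ := aux_uS_surj ψ sc hsc w
    have h2 : (LinearMap.rTensor B ψ) (sc • bb - (LinearMap.lTensor Y f) v) = 0 := by
      rw [map_sub, map_smul, ← hw, ← LinearMap.comp_apply, ← N4, LinearMap.comp_apply, hv,
        ← map_smul, sub_self]
    obtain ⟨u, hu⟩ := hse1' _ (by rwa [LinearMap.mem_ker])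
    refine ⟨(LinearMap.lTensor X g) u, ?_⟩
    rw [← LinearMap.comp_apply, ← N1, LinearMap.comp_apply, hu, map_smul, map_sub, map_smul,
      hbb, Function.Exact.apply_apply_eq_zero (hpure Y).2.2 v, sub_zero, smul_smul]
  · -- (u-S) range ⊆ ker at Y ⊗ C
    rintro b ⟨x, rfl⟩
    obtain ⟨xx, hxx⟩ := (hpure X).2.1 x
    have h7 := hse2' _ ⟨xx, rfl⟩
    rw [LinearMap.mem_ker] at h7
    rw [LinearMap.mem_ker, map_smul, ← hxx,
      ← LinearMap.comp_apply (LinearMap.rTensor C φ) (LinearMap.lTensor X g), ← N1,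
      LinearMap.comp_apply,
      ← LinearMap.comp_apply (LinearMap.rTensor C ψ) (LinearMap.lTensor Y g), ← N2,
      LinearMap.comp_apply, mul_comm se' sc, mul_smul,
      ← map_smul (LinearMap.lTensor Z g), ← map_smul (LinearMap.rTensor B ψ), h7,
      map_zero, smul_zero]
end

section
/- Let R be a commutative ring and S a multiplicative subset of R. Any finite direct sum of u-S-flat R-modules is u-S-flat. -/
universe u v

/-! The sequence `0 → A ⊗ (⨁ i, M i) → B ⊗ (⨁ i, M i) → C ⊗ (⨁ i, M i) → 0` is isomorphic,
via `TensorProduct.directSumRight`, to the direct sum of the sequences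
`0 → A ⊗ M i → B ⊗ M i → C ⊗ M i → 0`. Each of these is `u`-`S`-exact with its own witnesses in
`S`; since `ι` is finite, the product of the witnesses serves for all components at once, and
`u`-`S`-exactness is invariant under isomorphisms of sequences. -/

open LinearMap TensorProduct DirectSum

section Transport

variable {R : Type*} [CommRing R]
  {A B A' B' : Type*} [AddCommGroup A] [AddCommGroup B] [AddCommGroup A'] [AddCommGroup B']
  [Module R A] [Module R B] [Module R A'] [Module R B']
  {f : A →ₗ[R] B} {f' : A' →ₗ[R] B'} {e₁ : A ≃ₗ[R] A'} {e₂ : B ≃ₗ[R] B'}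

lemma LinearMap.mem_ker_iff_of_comp_eq (h : e₂.toLinearMap ∘ₗ f = f' ∘ₗ e₁.toLinearMap) (x : A) :
    x ∈ ker f ↔ e₁ x ∈ ker f' := by
  rw [mem_ker, mem_ker, ← e₂.map_eq_zero_iff]
  exact Eq.congr_left (LinearMap.congr_fun h x)

lemma LinearMap.mem_range_iff_of_comp_eq (h : e₂.toLinearMap ∘ₗ f = f' ∘ₗ e₁.toLinearMap)
    (y : B) : y ∈ range f ↔ e₂ y ∈ range f' := by
  constructor
  · rintro ⟨x, rfl⟩
    exact ⟨e₁ x, (LinearMap.congr_fun h x).symm⟩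
  · rintro ⟨x', hx'⟩
    refine ⟨e₁.symm x', e₂.injective ?_⟩
    simpa [hx'] using LinearMap.congr_fun h (e₁.symm x')

theorem IsUSShortExact.of_comp_eq {S : Submonoid R} {C C' : Type*} [AddCommGroup C]
    [AddCommGroup C'] [Module R C] [Module R C'] {g : B →ₗ[R] C} {g' : B' →ₗ[R] C'}
    {e₃ : C ≃ₗ[R] C'} (hf : e₂.toLinearMap ∘ₗ f = f' ∘ₗ e₁.toLinearMap)
    (hg : e₃.toLinearMap ∘ₗ g = g' ∘ₗ e₂.toLinearMap) (h : IsUSShortExact S f' g') :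
    IsUSShortExact S f g := by
  obtain ⟨⟨s₁, hs₁, h₁⟩, ⟨s₂, hs₂, h₂⟩, s₃, hs₃, h₃, h₃'⟩ := h
  refine ⟨⟨s₁, hs₁, fun a ha => ?_⟩, ⟨s₂, hs₂, fun c => ?_⟩, s₃, hs₃, fun b hb => ?_,
    fun b hb => ?_⟩
  · rw [← e₁.map_eq_zero_iff, map_smul]
    exact h₁ _ ((mem_ker_iff_of_comp_eq hf a).1 ha)
  · rw [mem_range_iff_of_comp_eq hg, map_smul]
    exact h₂ _
  · rw [mem_range_iff_of_comp_eq hf, map_smul]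
    exact h₃ _ ((mem_ker_iff_of_comp_eq hg b).1 hb)
  · rw [mem_ker_iff_of_comp_eq hg, map_smul]
    exact h₃' _ ((mem_range_iff_of_comp_eq hf b).1 hb)

end Transport

theorem Submonoid.exists_forall_of_finite {M : Type*} [CommMonoid M] (S : Submonoid M)
    {ι : Type*} [Finite ι] {P : ι → M → Prop} (hP : ∀ i s t, P i s → P i (t * s))
    (h : ∀ i, ∃ s ∈ S, P i s) : ∃ s ∈ S, ∀ i, P i s := by
  classical
  cases nonempty_fintype ι
  choose s hsS hs using h
  refine ⟨∏ i, s i, _root_.prod_mem fun i _ => hsS i, fun i => ?_⟩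
  rw [← Finset.prod_erase_mul _ _ (Finset.mem_univ i)]
  exact hP _ _ _ (hs i)

section DirectSum

variable {R : Type*} [CommRing R] {ι : Type*}
  {A B C : ι → Type*} [∀ i, AddCommGroup (A i)] [∀ i, AddCommGroup (B i)]
  [∀ i, AddCommGroup (C i)] [∀ i, Module R (A i)] [∀ i, Module R (B i)] [∀ i, Module R (C i)]

lemma DirectSum.mem_ker_lmap {f : ∀ i, A i →ₗ[R] B i} (x : ⨁ i, A i) :
    x ∈ ker (lmap f) ↔ ∀ i, x i ∈ ker (f i) := by
  simp [ker_lmap, Submodule.mem_pi]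

lemma DirectSum.mem_range_lmap {f : ∀ i, A i →ₗ[R] B i} (y : ⨁ i, B i) :
    y ∈ range (lmap f) ↔ ∀ i, y i ∈ range (f i) := by
  simp [range_lmap, Submodule.mem_pi]

theorem IsUSShortExact.lmap [Finite ι] {S : Submonoid R} {f : ∀ i, A i →ₗ[R] B i}
    {g : ∀ i, B i →ₗ[R] C i} (h : ∀ i, IsUSShortExact S (f i) (g i)) :
    IsUSShortExact S (lmap f) (lmap g) := by
  obtain ⟨s₁, hs₁, h₁⟩ := S.exists_forall_of_finite
    (P := fun i s => ∀ a ∈ ker (f i), s • a = 0)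
    (fun i s t h a ha => by rw [mul_smul, h a ha, smul_zero]) fun i => (h i).1
  obtain ⟨s₂, hs₂, h₂⟩ := S.exists_forall_of_finite
    (P := fun i s => ∀ c, s • c ∈ range (g i))
    (fun i s t h c => by rw [mul_smul]; exact Submodule.smul_mem _ t (h c)) fun i => (h i).2.1
  obtain ⟨s₃, hs₃, h₃⟩ := S.exists_forall_of_finite
    (P := fun i s => (∀ b ∈ ker (g i), s • b ∈ range (f i)) ∧
      ∀ b ∈ range (f i), s • b ∈ ker (g i))
    (fun i s t h => ⟨fun b hb => by rw [mul_smul]; exact Submodule.smul_mem _ t (h.1 b hb),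
      fun b hb => by rw [mul_smul]; exact Submodule.smul_mem _ t (h.2 b hb)⟩)
    fun i => (h i).2.2
  refine ⟨⟨s₁, hs₁, fun a ha => ?_⟩, ⟨s₂, hs₂, fun c => ?_⟩, s₃, hs₃, fun b hb => ?_,
    fun b hb => ?_⟩
  · ext i
    rw [DirectSum.smul_apply]
    exact h₁ i (a i) ((mem_ker_lmap a).1 ha i)
  · exact (mem_range_lmap _).2 fun i => DirectSum.smul_apply s₂ c i ▸ h₂ i (c i)
  · exact (mem_range_lmap _).2 fun i =>
      DirectSum.smul_apply s₃ b i ▸ (h₃ i).1 (b i) ((mem_ker_lmap b).1 hb i)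
  · exact (mem_ker_lmap _).2 fun i =>
      DirectSum.smul_apply s₃ b i ▸ (h₃ i).2 (b i) ((mem_range_lmap b).1 hb i)

end DirectSum

/-- Any finite direct sum of `u`-`S`-flat modules is `u`-`S`-flat. -/
theorem isUSFlat_directSum {R : Type u} [CommRing R] (S : Submonoid R)
    (ι : Type) [Finite ι] (M : ι → Type v)
    [∀ i, AddCommGroup (M i)] [∀ i, Module R (M i)]
    (hM : ∀ i, IsUSFlat S (M i)) : IsUSFlat S (DirectSum ι M) := by
  classical
  intro A B C _ _ _ _ _ _ f g hfg
  exact (IsUSShortExact.lmap fun i => hM i A B C f g hfg).of_comp_eq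
    (directSumRight_comp_rTensor ..) (directSumRight_comp_rTensor ..)
end

section
/- Let R be a commutative ring, S a multiplicative subset of R, and 0 → A →f B →g C → 0 a u-S-exact sequence of R-modules. If A and C are u-S-flat, then B is u-S-flat. -/
universe u v

open LinearMap TensorProduct

theorem USaux_comm {R : Type u} [CommRing R] {X Y M N : Type*}
    [AddCommGroup X] [AddCommGroup Y] [AddCommGroup M] [AddCommGroup N]
    [Module R X] [Module R Y] [Module R M] [Module R N]
    (m : X →ₗ[R] Y) (α : M →ₗ[R] N) (w : X ⊗[R] M) :
    rTensor N m (lTensor X α w) = lTensor Y α (rTensor M m w) := by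
  rw [← LinearMap.comp_apply, ← LinearMap.comp_apply, rTensor_comp_lTensor,
    lTensor_comp_rTensor]


theorem USaux_transfer {R : Type u} [CommRing R] (S : Submonoid R)
    {M N : Type v} [AddCommGroup M] [AddCommGroup N] [Module R M] [Module R N]
    (φ : M →ₗ[R] N) (ψ : N →ₗ[R] M) (t : R) (ht : t ∈ S)
    (hφψ : φ ∘ₗ ψ = t • LinearMap.id) (hM : IsUSFlat S M) : IsUSFlat S N := by
  intro X Y Z _ _ _ _ _ _ u v hE
  obtain ⟨⟨s1, hs1S, hs1⟩, ⟨s2, hs2S, hs2⟩, ⟨s3, hs3S, h3k, h3r⟩⟩ := hM X Y Z u v hE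
  have key : ∀ (W : Type v) [AddCommGroup W] [Module R W] (w : W ⊗[R] N),
      t • w = lTensor W φ (lTensor W ψ w) := by
    intro W _ _ w
    rw [← LinearMap.comp_apply, ← lTensor_comp, hφψ, lTensor_smul, LinearMap.smul_apply,
      lTensor_id, LinearMap.id_apply]
  refine ⟨⟨s1 * t, S.mul_mem hs1S ht, ?_⟩, ⟨s2 * t, S.mul_mem hs2S ht, ?_⟩,
    ⟨s3 * t, S.mul_mem hs3S ht, ?_, ?_⟩⟩
  · intro w hw
    have hx : lTensor X ψ w ∈ ker (rTensor M u) := by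
      rw [mem_ker, USaux_comm, mem_ker.mp hw, map_zero]
    rw [mul_smul, key X w, ← map_smul, hs1 _ hx, map_zero]
  · intro z
    obtain ⟨y, hy⟩ := hs2 (lTensor Z ψ z)
    refine ⟨lTensor Y φ y, ?_⟩
    rw [USaux_comm, hy, ← map_smul, ← key Z (s2 • z), smul_smul, mul_comm t s2]
  · intro w hw
    have hx : lTensor Y ψ w ∈ ker (rTensor M v) := by
      rw [mem_ker, USaux_comm, mem_ker.mp hw, map_zero]
    obtain ⟨x, hxx⟩ := h3k _ hx
    refine ⟨lTensor X φ x, ?_⟩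
    rw [USaux_comm, hxx, ← map_smul, ← key Y (s3 • w), smul_smul, mul_comm t s3]
  · rintro w ⟨x, rfl⟩
    have h0 : s3 • rTensor M v (rTensor M u (lTensor X ψ x)) = 0 := by
      have := h3r (rTensor M u (lTensor X ψ x)) ⟨_, rfl⟩
      rw [mem_ker, map_smul] at this
      exact this
    rw [mem_ker, map_smul, mul_smul, key Z ((rTensor N v) ((rTensor N u) x)),
      ← USaux_comm v ψ, ← USaux_comm u ψ, ← map_smul, h0, map_zero]

theorem USaux_purity {R : Type u} [CommRing R] (S : Submonoid R)
    {A B C : Type v} [AddCommGroup A] [AddCommGroup B] [AddCommGroup C]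
    [Module R A] [Module R B] [Module R C]
    (f : A →ₗ[R] B) (g : B →ₗ[R] C)
    (hf : Function.Injective f) (hg : Function.Surjective g)
    (hfg : Function.Exact f g)
    (hCflat : ∃ s ∈ S, ∀ a ∈ ker (rTensor C (CharacterModule.dual g :
        CharacterModule C →ₗ[R] CharacterModule B)), s • a = 0) :
    ∃ s ∈ S, ∀ (Y : Type v) [AddCommGroup Y] [Module R Y]
      (x : Y ⊗[R] A), lTensor Y f x = 0 → s • x = 0 := by
  classical
  obtain ⟨s₁, hs₁S, hs₁⟩ := hCflat
  set i : CharacterModule C →ₗ[R] CharacterModule B := CharacterModule.dual g with hidef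
  set ev : CharacterModule ((CharacterModule C) ⊗[R] C) :=
    CharacterModule.uncurry (R := R) (LinearMap.id) with hev
  set jz : (CharacterModule C) ⊗[R] C →ₗ[ℤ] (CharacterModule B) ⊗[R] C :=
    (rTensor C i).toAddMonoidHom.toIntLinearMap with hjz
  have hle : ker jz ≤ ker ((s₁ • ev : CharacterModule _).toIntLinearMap) := by
    intro x hx
    have hx' : rTensor C i x = 0 := hx
    have := hs₁ x (mem_ker.mpr hx')
    show (s₁ • ev) x = 0
    rw [CharacterModule.smul_apply, this, map_zero]
  set θ : ((CharacterModule C) ⊗[R] C ⧸ ker jz) →ₗ[ℤ] AddCircle (1:ℚ) :=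
    Submodule.liftQ (ker jz) _ hle with hθ
  obtain ⟨Θ, hΘ⟩ := CharacterModule.dual_surjective_of_injective
    (Submodule.subtype (range jz)) (Submodule.injective_subtype _)
    ((θ ∘ₗ (jz.quotKerEquivRange).symm.toLinearMap).toAddMonoidHom)
  have hΘi : ∀ x : (CharacterModule C) ⊗[R] C, Θ (rTensor C i x) = ev (s₁ • x) := by
    intro x
    have hxmem : jz x ∈ range jz := ⟨x, rfl⟩
    have h1 : Θ (rTensor C i x)
        = (θ ∘ₗ (jz.quotKerEquivRange).symm.toLinearMap).toAddMonoidHom ⟨jz x, hxmem⟩ :=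
      DFunLike.congr_fun hΘ ⟨jz x, hxmem⟩
    rw [h1]
    show θ ((jz.quotKerEquivRange).symm ⟨jz x, hxmem⟩) = ev (s₁ • x)
    rw [jz.quotKerEquivRange_symm_apply_image x hxmem]
    show (s₁ • ev) x = ev (s₁ • x)
    rw [CharacterModule.smul_apply]
  set ρ : CharacterModule B →ₗ[R] CharacterModule C := CharacterModule.curry (R := R) Θ with hρdef
  have hρ : ∀ γ : CharacterModule C, ρ (i γ) = s₁ • γ := by
    intro γ
    ext c
    show Θ ((i γ) ⊗ₜ c) = (s₁ • γ) c
    have h0 : (i γ) ⊗ₜ[R] c = rTensor C i (γ ⊗ₜ c) := rfl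
    rw [h0, hΘi, smul_tmul']
    rfl
  set df : CharacterModule B →ₗ[R] CharacterModule A := CharacterModule.dual f with hdfdef
  have hdf : Function.Surjective df := CharacterModule.dual_surjective_of_injective f hf
  set e : CharacterModule B →ₗ[R] CharacterModule B := s₁ • LinearMap.id - i ∘ₗ ρ with he
  have hkersub : ker df ≤ ker e := by
    intro χ hχ
    have hχf : ∀ a, χ (f a) = 0 := fun a => DFunLike.congr_fun (mem_ker.mp hχ) a
    have hkerg : ∀ b ∈ g.toAddMonoidHom.ker, χ b = 0 := by
      intro b hb
      obtain ⟨a, rfl⟩ := (hfg b).mp hb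
      exact hχf a
    set γ : CharacterModule C := (QuotientAddGroup.lift g.toAddMonoidHom.ker χ hkerg).comp
      (QuotientAddGroup.quotientKerEquivOfSurjective g.toAddMonoidHom hg).symm.toAddMonoidHom
      with hγ
    have hiγ : i γ = χ := by
      ext b
      show γ (g b) = χ b
      have hsy : (QuotientAddGroup.quotientKerEquivOfSurjective g.toAddMonoidHom hg).symm (g b)
          = (b : B ⧸ g.toAddMonoidHom.ker) := by
        rw [AddEquiv.symm_apply_eq]; rfl
      show (QuotientAddGroup.lift g.toAddMonoidHom.ker χ hkerg)
        ((QuotientAddGroup.quotientKerEquivOfSurjective g.toAddMonoidHom hg).symm (g b)) = χ b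
      rw [hsy]
      rfl
    rw [mem_ker, ← hiγ]
    show s₁ • (i γ) - i (ρ (i γ)) = 0
    rw [hρ γ, map_smul, sub_self]
  set σ : CharacterModule A →ₗ[R] CharacterModule B :=
    (Submodule.liftQ (ker df) e hkersub) ∘ₗ (df.quotKerEquivOfSurjective hdf).symm.toLinearMap
    with hσdef
  have hdfi : ∀ γ, df (i γ) = 0 := by
    intro γ
    ext a
    show γ (g (f a)) = 0
    rw [hfg.apply_apply_eq_zero a, map_zero]
  have hσ : ∀ a : CharacterModule A, df (σ a) = s₁ • a := by
    intro a
    obtain ⟨χ, rfl⟩ := hdf a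
    have h1 : (df.quotKerEquivOfSurjective hdf).symm (df χ) = Submodule.Quotient.mk χ := by
      rw [LinearEquiv.symm_apply_eq]; rfl
    have h2 : σ (df χ) = e χ := by
      show (Submodule.liftQ (ker df) e hkersub) ((df.quotKerEquivOfSurjective hdf).symm (df χ)) = e χ
      rw [h1]
      rfl
    rw [h2, he]
    show df (s₁ • χ - i (ρ χ)) = s₁ • df χ
    rw [map_sub, map_smul, hdfi, sub_zero]
  refine ⟨s₁, hs₁S, ?_⟩
  intro Y _ _ x hx
  apply CharacterModule.eq_zero_of_character_apply
  intro χ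
  set Ψ : CharacterModule (Y ⊗[R] B) :=
    CharacterModule.uncurry (R := R) (σ ∘ₗ CharacterModule.curry (R := R) χ) with hΨ
  have key : ∀ w : Y ⊗[R] A, Ψ (lTensor Y f w) = χ (s₁ • w) := by
    intro w
    induction w using TensorProduct.induction_on with
    | zero => simp
    | tmul y a =>
      show (σ (CharacterModule.curry (R := R) χ y)) (f a) = χ (s₁ • (y ⊗ₜ a))
      have h1 : (σ (CharacterModule.curry (R := R) χ y)) (f a)
          = (df (σ (CharacterModule.curry (R := R) χ y))) a := rfl
      rw [h1, hσ, CharacterModule.smul_apply]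
      show χ (y ⊗ₜ (s₁ • a)) = χ (s₁ • (y ⊗ₜ a))
      rw [tmul_smul]
    | add w₁ w₂ h₁ h₂ =>
      rw [map_add, map_add, smul_add, map_add, h₁, h₂]
  have hk := key x
  rw [hx, map_zero] at hk
  exact hk.symm

theorem USaux_middle_honest {R : Type u} [CommRing R] (S : Submonoid R)
    {A B C : Type v} [AddCommGroup A] [AddCommGroup B] [AddCommGroup C]
    [Module R A] [Module R B] [Module R C]
    (f : A →ₗ[R] B) (g : B →ₗ[R] C)
    (hf : Function.Injective f) (hg : Function.Surjective g) (hfg : Function.Exact f g)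
    (hA : IsUSFlat S A) (hC : IsUSFlat S C) : IsUSFlat S B := by
  have hCdual : ∃ s ∈ S, ∀ a ∈ ker (rTensor C (CharacterModule.dual g :
      CharacterModule C →ₗ[R] CharacterModule B)), s • a = 0 := by
    set i : CharacterModule C →ₗ[R] CharacterModule B := CharacterModule.dual g with hidef
    have hi : Function.Injective i := by
      intro χ χ' hh
      ext c
      obtain ⟨b, rfl⟩ := hg c
      exact DFunLike.congr_fun hh b
    have hses : IsUSShortExact S i (Submodule.mkQ (range i)) := by
      refine ⟨⟨1, S.one_mem, ?_⟩, ⟨1, S.one_mem, ?_⟩, 1, S.one_mem, ?_, ?_⟩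
      · intro a ha
        rw [one_smul]
        exact hi (by simpa using mem_ker.mp ha)
      · intro c
        obtain ⟨b, hb⟩ := Submodule.mkQ_surjective (range i) c
        exact ⟨b, by rw [hb, one_smul]⟩
      · intro b hb
        rw [one_smul]
        rwa [mem_ker, Submodule.mkQ_apply, Submodule.Quotient.mk_eq_zero] at hb
      · intro b hb
        rw [one_smul, mem_ker, Submodule.mkQ_apply, Submodule.Quotient.mk_eq_zero]
        exact hb
    exact (hC _ _ _ i (Submodule.mkQ (range i)) hses).1
  obtain ⟨sP, hsPS, hP⟩ := USaux_purity S f g hf hg hfg hCdual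
  intro X Y Z _ _ _ _ _ _ u v hE
  obtain ⟨⟨sA1, hsA1S, hA1⟩, -, ⟨sA3, hsA3S, hA3k, -⟩⟩ := hA X Y Z u v hE
  obtain ⟨⟨sC1, hsC1S, hC1⟩, -, ⟨sC3, hsC3S, hC3k, -⟩⟩ := hC X Y Z u v hE
  obtain ⟨-, ⟨sE2, hsE2S, hE2⟩, ⟨sE3, hsE3S, -, hE3r⟩⟩ := hE
  have hvu : ∀ x : X ⊗[R] B, sE3 • rTensor B v (rTensor B u x) = 0 := by
    intro x
    have hm : sE3 • (v ∘ₗ u) = 0 := by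
      ext x'
      have h0 := mem_ker.mp (hE3r (u x') ⟨x', rfl⟩)
      show sE3 • v (u x') = 0
      rw [← map_smul, h0]
    calc sE3 • rTensor B v (rTensor B u x) = rTensor B (sE3 • (v ∘ₗ u)) x := by
          rw [rTensor_smul, LinearMap.smul_apply, rTensor_comp, LinearMap.comp_apply]
      _ = 0 := by rw [hm, rTensor_zero, LinearMap.zero_apply]
  refine ⟨⟨sA1 * (sP * sC1), S.mul_mem hsA1S (S.mul_mem hsPS hsC1S), ?_⟩,
    ⟨sE2, hsE2S, ?_⟩,
    (sA3 * (sP * sE3)) * sC3,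
      S.mul_mem (S.mul_mem hsA3S (S.mul_mem hsPS hsE3S)) hsC3S, ?_, ?_⟩
  · -- kernel of rTensor B u is torsion
    intro w hw
    have h1 : rTensor C u (lTensor X g w) = 0 := by
      rw [USaux_comm, mem_ker.mp hw, map_zero]
    have h2 : lTensor X g (sC1 • w) = 0 := by
      rw [map_smul, hC1 _ (mem_ker.mpr h1)]
    obtain ⟨α, hα⟩ := (lTensor_exact X hfg hg (sC1 • w)).mp h2
    have h3 : lTensor Y f (rTensor A u α) = 0 := by
      rw [← USaux_comm, hα, map_smul, mem_ker.mp hw, smul_zero]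
    have h5 : rTensor A u (sP • α) = 0 := by rw [map_smul, hP Y (rTensor A u α) h3]
    have h6 := hA1 _ (mem_ker.mpr h5)
    rw [mul_smul, mul_smul, ← hα, ← map_smul, ← map_smul, h6, map_zero]
  · -- surjectivity up to sE2
    intro z
    induction z using TensorProduct.induction_on with
    | zero => rw [smul_zero]; exact Submodule.zero_mem _
    | tmul zc b =>
      obtain ⟨y, hy⟩ := hE2 zc
      refine ⟨y ⊗ₜ b, ?_⟩
      rw [rTensor_tmul, hy, smul_tmul']
    | add z₁ z₂ h₁ h₂ =>
      rw [smul_add]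
      exact Submodule.add_mem _ h₁ h₂
  · -- ker (rTensor B v) ⊆ range (rTensor B u) up to scalar
    intro w hw
    have h1 : rTensor C v (lTensor Y g w) = 0 := by
      rw [USaux_comm, mem_ker.mp hw, map_zero]
    obtain ⟨α, hα⟩ := hC3k _ (mem_ker.mpr h1)
    obtain ⟨α', hα'⟩ := lTensor_surjective X hg α
    set w₁ : Y ⊗[R] B := sC3 • w - rTensor B u α' with hw₁
    have h2 : lTensor Y g w₁ = 0 := by
      rw [hw₁, map_sub, map_smul, ← USaux_comm, hα', hα, sub_self]
    obtain ⟨β, hβ⟩ := (lTensor_exact Y hfg hg w₁).mp h2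
    have h3 : lTensor Z f (sE3 • rTensor A v β) = 0 := by
      rw [map_smul, ← USaux_comm, hβ, hw₁, map_sub, map_smul, mem_ker.mp hw, smul_zero,
        zero_sub, smul_neg, hvu α', neg_zero]
    have h5 : rTensor A v ((sP * sE3) • β) = 0 := by
      rw [map_smul, mul_smul]
      exact hP Z _ h3
    obtain ⟨γ, hγ⟩ := hA3k _ (mem_ker.mpr h5)
    refine ⟨lTensor X f γ + (sA3 * (sP * sE3)) • α', ?_⟩
    rw [map_add, map_smul, USaux_comm, hγ, map_smul, map_smul, hβ, hw₁]
    module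
  · -- range (rTensor B u) goes into ker (rTensor B v) up to scalar
    rintro w ⟨x, rfl⟩
    rw [mem_ker, map_smul,
      show (sA3 * (sP * sE3)) * sC3 = (sA3 * sP * sC3) * sE3 by ring, mul_smul, hvu,
      smul_zero]

/-- If `0 → A →f B →g C → 0` is a `u`-`S`-exact sequence and `A` and `C` are
`u`-`S`-flat, then `B` is `u`-`S`-flat. -/
theorem isUSFlat_middle {R : Type u} [CommRing R] (S : Submonoid R)
    {A B C : Type v} [AddCommGroup A] [AddCommGroup B] [AddCommGroup C]
    [Module R A] [Module R B] [Module R C]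
    (f : A →ₗ[R] B) (g : B →ₗ[R] C) (h : IsUSShortExact S f g)
    (hA : IsUSFlat S A) (hC : IsUSFlat S C) : IsUSFlat S B := by
  obtain ⟨⟨s₀, hs₀S, hs₀⟩, ⟨s', hs'S, hs'⟩, ⟨s, hsS, hks, hsk⟩⟩ := h
  -- the honest short exact sequence 0 → ker g → B → range g → 0
  -- transfer u-S-flatness from A to ker g
  set φA : A →ₗ[R] ker g :=
    LinearMap.codRestrict (ker g) (s • f) (fun a => by simpa using hsk (f a) ⟨a, rfl⟩)
    with hφA
  set ψ₁ : ker g →ₗ[R] range f :=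
    LinearMap.codRestrict (range f) (s • (ker g).subtype) (fun k => by simpa using hks k k.2)
    with hψ₁
  have hle : ker f ≤ ker (s₀ • (LinearMap.id : A →ₗ[R] A)) := by
    intro a ha
    rw [mem_ker, LinearMap.smul_apply, LinearMap.id_apply, hs₀ a ha]
  set ψ₂ : range f →ₗ[R] A :=
    (Submodule.liftQ (ker f) (s₀ • LinearMap.id) hle) ∘ₗ (f.quotKerEquivRange).symm.toLinearMap
    with hψ₂def
  have hψ₂ : ∀ y : range f, f (ψ₂ y) = s₀ • (y : B) := by
    rintro ⟨y, hy⟩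
    obtain ⟨x, rfl⟩ := hy
    have h1 : (f.quotKerEquivRange).symm ⟨f x, ⟨x, rfl⟩⟩ = (ker f).mkQ x :=
      f.quotKerEquivRange_symm_apply_image x ⟨x, rfl⟩
    show f ((Submodule.liftQ (ker f) (s₀ • LinearMap.id) hle)
      ((f.quotKerEquivRange).symm ⟨f x, ⟨x, rfl⟩⟩)) = s₀ • f x
    rw [h1, Submodule.mkQ_apply, Submodule.liftQ_apply, LinearMap.smul_apply,
      LinearMap.id_apply, map_smul]
  have hφψA : φA ∘ₗ (ψ₂ ∘ₗ ψ₁) = (s₀ * (s * s)) • LinearMap.id := by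
    ext k
    show s • f (ψ₂ (ψ₁ k)) = (s₀ * (s * s)) • (k : B)
    rw [hψ₂ (ψ₁ k)]
    show s • s₀ • (s • (k : B)) = (s₀ * (s * s)) • (k : B)
    rw [smul_smul, smul_smul, show s * s₀ * s = s₀ * (s * s) from by ring]
  have hKflat : IsUSFlat S (ker g) :=
    USaux_transfer S φA (ψ₂ ∘ₗ ψ₁) (s₀ * (s * s))
      (S.mul_mem hs₀S (S.mul_mem hsS hsS)) hφψA hA
  -- transfer u-S-flatness from C to range g
  set φC : C →ₗ[R] range g :=
    LinearMap.codRestrict (range g) (s' • LinearMap.id) (fun c => by simpa using hs' c)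
    with hφC
  have hφψC : φC ∘ₗ (range g).subtype = s' • LinearMap.id := by
    ext y
    rfl
  have hRflat : IsUSFlat S (range g) :=
    USaux_transfer S φC (range g).subtype s' hs'S hφψC hC
  -- conclude
  refine USaux_middle_honest S (ker g).subtype g.rangeRestrict
    (Submodule.injective_subtype _) (g.surjective_rangeRestrict) ?_ hKflat hRflat
  rw [LinearMap.exact_iff, LinearMap.ker_rangeRestrict, Submodule.range_subtype]
end

section
/- Let R be a commutative ring, S a multiplicative subset of R, and 0 → A →f B →g C → 0 a u-S-exact sequence of R-modules. If B and C are u-S-flat, then A is u-S-flat. -/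
universe u v

open TensorProduct LinearMap

lemma charExtend {R : Type u} [CommRing R] {X Y : Type*} [AddCommGroup X] [AddCommGroup Y]
    [Module R X] [Module R Y] (j : X →ₗ[R] Y) (t : R) (ht : ∀ x, j x = 0 → t • x = 0)
    (χ : CharacterModule X) :
    ∃ χ' : CharacterModule Y, ∀ x, χ' (j x) = χ (t • x) := by
  have key : ∀ x x' : X, j x = j x' → χ (t • x) = χ (t • x') := by
    intro x x' hxx
    have h0 : t • (x - x') = 0 := ht _ (by rw [map_sub, hxx, sub_self])
    rw [smul_sub] at h0
    rw [sub_eq_zero.mp h0]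
  have memc : ∀ y : LinearMap.range j, ∃ x, j x = (y : Y) := fun y => y.2
  let pick : LinearMap.range j → X := fun y => (memc y).choose
  have hpick : ∀ y, j (pick y) = (y : Y) := fun y => (memc y).choose_spec
  let ρ : CharacterModule (LinearMap.range j) :=
    AddMonoidHom.mk' (fun y => χ (t • pick y)) (by
      intro y z
      have h1 : j (pick (y + z)) = j (pick y + pick z) := by
        rw [map_add, hpick, hpick, hpick]; rfl
      show χ (t • pick (y + z)) = χ (t • pick y) + χ (t • pick z)
      rw [key _ _ h1, smul_add, map_add])
  obtain ⟨χ', hχ'⟩ := CharacterModule.dual_surjective_of_injective _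
    (Submodule.injective_subtype (LinearMap.range j)) ρ
  refine ⟨χ', fun x => ?_⟩
  have hx : j x ∈ LinearMap.range j := ⟨x, rfl⟩
  have h2 := DFunLike.congr_fun hχ' (⟨j x, hx⟩ : LinearMap.range j)
  have h3 : χ' (j x) = ρ ⟨j x, hx⟩ := h2
  rw [h3]
  exact key _ _ (hpick ⟨j x, hx⟩)

section Engine

variable {R : Type u} [CommRing R] (S : Submonoid R) {A B C : Type v}
  [AddCommGroup A] [AddCommGroup B] [AddCommGroup C]
  [Module R A] [Module R B] [Module R C]
  (f : A →ₗ[R] B) (g : B →ₗ[R] C)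

variable {s₁ s₂ s₃ : R}

lemma hD1 (hs₂ : ∀ c : C, s₂ • c ∈ LinearMap.range g) (χ : CharacterModule C)
    (hχ : CharacterModule.dual g χ = 0) : s₂ • χ = 0 := by
  ext c
  show χ (s₂ • c) = (0 : CharacterModule C) c
  obtain ⟨b, hb⟩ := hs₂ c
  rw [← hb]
  exact DFunLike.congr_fun hχ b

lemma hD2 (hs₁ : ∀ a ∈ LinearMap.ker f, s₁ • a = 0) (α : CharacterModule A) :
    ∃ β : CharacterModule B, CharacterModule.dual f β = s₁ • α := by
  obtain ⟨χ', hχ'⟩ := charExtend f s₁ (fun a ha => hs₁ a (LinearMap.mem_ker.mpr ha)) α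
  refine ⟨χ', ?_⟩
  ext a
  show χ' (f a) = α (s₁ • a)
  exact hχ' a

lemma hD3 (hs₂ : ∀ c : C, s₂ • c ∈ LinearMap.range g)
    (hs₃k : ∀ b ∈ LinearMap.ker g, s₃ • b ∈ LinearMap.range f)
    (χ : CharacterModule B) (hχ : CharacterModule.dual f χ = 0) :
    ∃ ψ : CharacterModule C, CharacterModule.dual g ψ = (s₂ * s₃) • χ := by
  have hker : ∀ b b' : B, g b = g b' → χ (s₃ • b) = χ (s₃ • b') := by
    intro b b' hbb
    have h1 : b - b' ∈ LinearMap.ker g := by rw [LinearMap.mem_ker, map_sub, hbb, sub_self]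
    obtain ⟨a, ha⟩ := hs₃k _ h1
    have h2 : χ (s₃ • b - s₃ • b') = 0 := by
      rw [← smul_sub, ← ha]
      exact DFunLike.congr_fun hχ a
    rw [map_sub] at h2
    exact sub_eq_zero.mp h2
  let pick : C → B := fun c => (hs₂ c).choose
  have hpick : ∀ c, g (pick c) = s₂ • c := fun c => (hs₂ c).choose_spec
  refine ⟨AddMonoidHom.mk' (fun c => χ (s₃ • pick c)) ?_, ?_⟩
  · intro c c'
    have h1 : g (pick (c + c')) = g (pick c + pick c') := by
      rw [map_add, hpick, hpick, hpick, smul_add]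
    show χ (s₃ • pick (c + c')) = χ (s₃ • pick c) + χ (s₃ • pick c')
    rw [hker _ _ h1, smul_add, map_add]
  · ext b
    show χ (s₃ • pick (g b)) = χ ((s₂ * s₃) • b)
    have h1 : g (pick (g b)) = g (s₂ • b) := by rw [hpick, map_smul]
    rw [hker _ _ h1, smul_smul, mul_comm s₃ s₂]

lemma hD4 (hs₃r : ∀ b ∈ LinearMap.range f, s₃ • b ∈ LinearMap.ker g) (χ : CharacterModule C) :
    s₃ • (CharacterModule.dual f (CharacterModule.dual g χ)) = 0 := by
  ext a
  show χ (g (f (s₃ • a))) = (0 : CharacterModule A) a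
  have h1 : f (s₃ • a) = s₃ • f a := map_smul f s₃ a
  have h2 : g (s₃ • f a) = 0 := LinearMap.mem_ker.mp (hs₃r (f a) ⟨a, rfl⟩)
  rw [h1, h2, map_zero]
  rfl

end Engine

section Engine2

variable {R : Type u} [CommRing R] {S : Submonoid R} {A B C : Type v}
  [AddCommGroup A] [AddCommGroup B] [AddCommGroup C]
  [Module R A] [Module R B] [Module R C]

/-- The main engine: from a `u`-`S`-exact sequence with `C` `u`-`S`-flat, we get uniform
constants witnessing purity (left exactness up to `S`) and right exactness of tensoring. -/
lemma engine (f : A →ₗ[R] B) (g : B →ₗ[R] C)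
    (h : IsUSShortExact S f g) (hC : IsUSFlat S C) :
    ∃ sp ∈ S, ∃ sr ∈ S,
      (∀ (M : Type v) [AddCommGroup M] [Module R M] (u : M ⊗[R] A),
        f.lTensor M u = 0 → sp • u = 0) ∧
      (∀ (M : Type v) [AddCommGroup M] [Module R M] (u : M ⊗[R] B),
        g.lTensor M u = 0 → sr • u ∈ LinearMap.range (f.lTensor M)) := by
  obtain ⟨⟨s₁, hs₁S, hs₁⟩, ⟨s₂, hs₂S, hs₂⟩, ⟨s₃, hs₃S, hs₃k, hs₃r⟩⟩ := h
  -- the dual sequence is u-S-short-exact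
  have dualSE : IsUSShortExact S (CharacterModule.dual g) (CharacterModule.dual f) := by
    refine ⟨⟨s₂, hs₂S, fun χ hχ => hD1 g hs₂ χ (LinearMap.mem_ker.mp hχ)⟩,
      ⟨s₁, hs₁S, fun α => hD2 f hs₁ α⟩,
      ⟨s₂ * s₃, mul_mem hs₂S hs₃S, fun χ hχ => hD3 f g hs₂ hs₃k χ (LinearMap.mem_ker.mp hχ),
        ?_⟩⟩
    rintro χ ⟨ψ, rfl⟩
    rw [LinearMap.mem_ker, map_smul, ← smul_smul, hD4 f g hs₃r ψ, smul_zero]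
  obtain ⟨w₁, hw₁S, hw₁⟩ := (hC _ _ _ (CharacterModule.dual g) (CharacterModule.dual f) dualSE).1
  -- the evaluation character on C⁺ ⊗ C and its partial extension to B⁺ ⊗ C
  set ε : CharacterModule (CharacterModule C ⊗[R] C) :=
    CharacterModule.homEquiv (LinearMap.id (R := R) (M := CharacterModule C)) with hε
  obtain ⟨εt, hεt⟩ := charExtend (LinearMap.rTensor C (CharacterModule.dual g)) w₁
    (fun x hx => hw₁ x (LinearMap.mem_ker.mpr hx)) ε
  -- the retraction r : B⁺ → C⁺
  let r : CharacterModule B →ₗ[R] CharacterModule C :=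
    { toFun := fun β => AddMonoidHom.mk' (fun c => εt (β ⊗ₜ c))
        (fun c c' => by
          show εt (β ⊗ₜ (c + c')) = εt (β ⊗ₜ c) + εt (β ⊗ₜ c')
          rw [tmul_add, map_add])
      map_add' := fun β β' => by
        ext c
        show εt ((β + β') ⊗ₜ c) = εt (β ⊗ₜ c) + εt (β' ⊗ₜ c)
        rw [add_tmul, map_add]
      map_smul' := fun ρ β => by
        ext c
        show εt ((ρ • β) ⊗ₜ c) = εt (β ⊗ₜ (ρ • c))
        rw [smul_tmul] }
  have hrg : ∀ χ : CharacterModule C, r (CharacterModule.dual g χ) = w₁ • χ := by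
    intro χ
    ext c
    show εt ((CharacterModule.dual g χ) ⊗ₜ c) = χ (w₁ • c)
    have h1 : (CharacterModule.dual g χ) ⊗ₜ[R] c
        = LinearMap.rTensor C (CharacterModule.dual g) (χ ⊗ₜ c) := by
      rw [LinearMap.rTensor_tmul]
    rw [h1, hεt, smul_tmul', smul_tmul]
    rfl
  -- key identity: on ker (dual f), (dual g) ∘ r is w₁ • id (up to s₂ s₃)
  have keyβ : ∀ β : CharacterModule B, CharacterModule.dual f β = 0 →
      (s₂ * s₃) • (CharacterModule.dual g (r β)) = ((s₂ * s₃) * w₁) • β := by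
    intro β hβ
    obtain ⟨ψ, hψ⟩ := hD3 f g hs₂ hs₃k β hβ
    have h1 : CharacterModule.dual g (r ((s₂ * s₃) • β))
        = (s₂ * s₃) • CharacterModule.dual g (r β) := by rw [map_smul, map_smul]
    have h2 : CharacterModule.dual g (r ((s₂ * s₃) • β)) = ((s₂ * s₃) * w₁) • β := by
      rw [← hψ, hrg, map_smul, hψ, smul_smul, mul_comm w₁]
    rw [← h1, h2]
  -- the u-S-splitting of the dual sequence
  let τ : CharacterModule B →ₗ[R] CharacterModule B :=
    (s₂ * s₃) • (w₁ • LinearMap.id - (CharacterModule.dual g) ∘ₗ r)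
  have hτ : ∀ β, τ β = (s₂ * s₃) • (w₁ • β - CharacterModule.dual g (r β)) := fun β => rfl
  have wellDef : ∀ β β' : CharacterModule B,
      CharacterModule.dual f β = CharacterModule.dual f β' → τ β = τ β' := by
    intro β β' hbb
    have hδ : CharacterModule.dual f (β - β') = 0 := by rw [map_sub, hbb, sub_self]
    have h2 := keyβ _ hδ
    have h3 : τ (β - β') = 0 := by
      rw [hτ, smul_sub, h2, smul_smul, sub_self]
    have h4 : τ (β - β') = τ β - τ β' := map_sub τ β β'
    rw [h4] at h3
    exact sub_eq_zero.mp h3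
  let pick2 : CharacterModule A → CharacterModule B := fun α => (hD2 f hs₁ α).choose
  have hpick2 : ∀ α, CharacterModule.dual f (pick2 α) = s₁ • α :=
    fun α => (hD2 f hs₁ α).choose_spec
  let σ : CharacterModule A →ₗ[R] CharacterModule B :=
    { toFun := fun α => τ (pick2 α)
      map_add' := fun α α' => by
        have h1 : CharacterModule.dual f (pick2 (α + α'))
            = CharacterModule.dual f (pick2 α + pick2 α') := by
          rw [map_add, hpick2, hpick2, hpick2, smul_add]
        show τ (pick2 (α + α')) = τ (pick2 α) + τ (pick2 α')
        rw [wellDef _ _ h1, map_add]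
      map_smul' := fun ρ α => by
        have h1 : CharacterModule.dual f (pick2 (ρ • α))
            = CharacterModule.dual f (ρ • pick2 α) := by
          rw [map_smul, hpick2, hpick2, smul_comm]
        show τ (pick2 (ρ • α)) = ρ • τ (pick2 α)
        rw [wellDef _ _ h1, map_smul] }
  have hσ : ∀ α : CharacterModule A,
      CharacterModule.dual f (σ α) = ((s₂ * s₃) * (w₁ * s₁)) • α := by
    intro α
    show CharacterModule.dual f (τ (pick2 α)) = _
    rw [hτ, map_smul, map_sub, map_smul, hpick2]
    have h2 : (s₂ * s₃) • CharacterModule.dual f (CharacterModule.dual g (r (pick2 α))) = 0 := by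
      rw [← smul_smul, hD4 f g hs₃r, smul_zero]
    rw [smul_sub, h2, sub_zero, smul_smul, smul_smul, mul_assoc]
  refine ⟨(s₂ * s₃) * (w₁ * s₁), mul_mem (mul_mem hs₂S hs₃S) (mul_mem hw₁S hs₁S),
    (s₂ * s₃) * w₁, mul_mem (mul_mem hs₂S hs₃S) hw₁S, ?_, ?_⟩
  · -- purity
    intro M _ _ u hu
    by_contra hne
    obtain ⟨χ, hχ⟩ := CharacterModule.exists_character_apply_ne_zero_of_ne_zero hne
    set lam : M →ₗ[R] CharacterModule A := CharacterModule.homEquiv.symm χ with hlam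
    have hlam2 : ∀ (m : M) (a : A), lam m a = χ (m ⊗ₜ a) := fun m a => rfl
    set chiB : CharacterModule (M ⊗[R] B) := CharacterModule.homEquiv (σ ∘ₗ lam) with hchiB
    have key : ∀ x : M ⊗[R] A, chiB (f.lTensor M x) = χ (((s₂ * s₃) * (w₁ * s₁)) • x) := by
      intro x
      induction x using TensorProduct.induction_on with
      | zero => rw [map_zero, map_zero, smul_zero, map_zero]
      | tmul m a =>
        rw [LinearMap.lTensor_tmul]
        have h1 : chiB (m ⊗ₜ f a) = σ (lam m) (f a) := rfl
        have h2 : σ (lam m) (f a) = CharacterModule.dual f (σ (lam m)) a := rfl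
        rw [h1, h2, hσ]
        show lam m (((s₂ * s₃) * (w₁ * s₁)) • a) = _
        rw [hlam2 m _, TensorProduct.tmul_smul]
      | add x y hx hy => rw [map_add, map_add, smul_add, map_add, hx, hy]
    have hcon := key u
    rw [hu, map_zero] at hcon
    exact hχ hcon.symm
  · -- right exactness
    intro M _ _ u hu
    by_contra hne
    set N := LinearMap.range (f.lTensor M) with hN
    have hmk : Submodule.Quotient.mk (p := N) (((s₂ * s₃) * w₁) • u) ≠ 0 := by
      intro h0
      exact hne ((Submodule.Quotient.mk_eq_zero N).mp h0)
    obtain ⟨χQ, hχQ⟩ := CharacterModule.exists_character_apply_ne_zero_of_ne_zero hmk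
    set χ : CharacterModule (M ⊗[R] B) := CharacterModule.dual N.mkQ χQ with hχdef
    have hχN : ∀ x : M ⊗[R] A, χ (f.lTensor M x) = 0 := by
      intro x
      show χQ (N.mkQ (f.lTensor M x)) = 0
      have h0 : N.mkQ (f.lTensor M x) = 0 := (Submodule.Quotient.mk_eq_zero N).mpr ⟨x, rfl⟩
      rw [h0, map_zero]
    have hχu : χ (((s₂ * s₃) * w₁) • u) ≠ 0 := hχQ
    set lam : M →ₗ[R] CharacterModule B := CharacterModule.homEquiv.symm χ with hlamd
    have hlamker : ∀ m : M, CharacterModule.dual f (lam m) = 0 := by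
      intro m
      ext a
      show χ (m ⊗ₜ f a) = (0 : CharacterModule A) a
      rw [← LinearMap.lTensor_tmul, hχN]
      rfl
    set η : CharacterModule (M ⊗[R] C) := CharacterModule.homEquiv (r ∘ₗ lam) with hηd
    have key : ∀ x : M ⊗[R] B,
        η (g.lTensor M ((s₂ * s₃) • x)) = χ (((s₂ * s₃) * w₁) • x) := by
      intro x
      induction x using TensorProduct.induction_on with
      | zero => simp
      | tmul m b =>
        have e1 : g.lTensor M ((s₂ * s₃) • (m ⊗ₜ b)) = m ⊗ₜ (g ((s₂ * s₃) • b)) := by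
          rw [← TensorProduct.tmul_smul, LinearMap.lTensor_tmul]
        rw [e1]
        have e2 : η (m ⊗ₜ (g ((s₂ * s₃) • b)))
            = ((s₂ * s₃) • CharacterModule.dual g (r (lam m))) b := rfl
        rw [e2, keyβ _ (hlamker m)]
        show lam m (((s₂ * s₃) * w₁) • b) = _
        rw [← TensorProduct.tmul_smul]
        rfl
      | add x y hx hy => rw [smul_add, map_add, map_add, hx, hy, smul_add, map_add]
    have hcon := key u
    rw [map_smul, hu, smul_zero, map_zero] at hcon
    exact hχu hcon.symm

end Engine2

lemma natural_square {R : Type u} [CommRing R] {M N P Q : Type*}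
    [AddCommGroup M] [AddCommGroup N] [AddCommGroup P] [AddCommGroup Q]
    [Module R M] [Module R N] [Module R P] [Module R Q]
    (phi : M →ₗ[R] P) (psi : N →ₗ[R] Q) (w : M ⊗[R] N) :
    phi.rTensor Q (psi.lTensor M w) = psi.lTensor P (phi.rTensor N w) := by
  induction w using TensorProduct.induction_on with
  | zero => simp
  | tmul m n => simp
  | add x y hx hy => simp only [map_add, hx, hy]

/-- If `0 → A →f B →g C → 0` is a `u`-`S`-exact sequence and `B` and `C` are
`u`-`S`-flat, then `A` is `u`-`S`-flat. -/
theorem isUSFlat_left {R : Type u} [CommRing R] (S : Submonoid R)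
    {A B C : Type v} [AddCommGroup A] [AddCommGroup B] [AddCommGroup C]
    [Module R A] [Module R B] [Module R C]
    (f : A →ₗ[R] B) (g : B →ₗ[R] C) (h : IsUSShortExact S f g)
    (hB : IsUSFlat S B) (hC : IsUSFlat S C) : IsUSFlat S A := by
  intro X Y Z _ _ _ _ _ _ p q hseq
  obtain ⟨sp, hspS, sr, hsrS, PURE, RIGHT⟩ := engine f g h hC
  have HB := hB X Y Z p q hseq
  have HCt := hC X Y Z p q hseq
  obtain ⟨⟨u₁, hu₁S, hu₁⟩, -, ⟨u₃, hu₃S, hu₃k, hu₃r⟩⟩ := HB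
  obtain ⟨⟨v₁, hv₁S, hv₁⟩, -, -⟩ := HCt
  obtain ⟨-, ⟨t₂, ht₂S, ht₂⟩, ⟨t₃, ht₃S, ht₃k, ht₃r⟩⟩ := hseq
  obtain ⟨-, -, ⟨s₃, hs₃S, hs₃k, hs₃r⟩⟩ := h
  refine ⟨⟨sp * u₁, mul_mem hspS hu₁S, ?_⟩, ⟨t₂, ht₂S, ?_⟩, ?_⟩
  · -- kernel of p ⊗ A is killed by sp * u₁
    intro x hx
    rw [LinearMap.mem_ker] at hx
    have hcomm : p.rTensor B (f.lTensor X x) = f.lTensor Y (p.rTensor A x) :=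
      natural_square p f x
    have h1 : p.rTensor B (f.lTensor X x) = 0 := by rw [hcomm, hx, map_zero]
    have h2 := hu₁ _ (LinearMap.mem_ker.mpr h1)
    rw [← map_smul] at h2
    have h3 := PURE X (u₁ • x) h2
    rw [smul_smul] at h3
    exact h3
  · -- cokernel of q ⊗ A is killed by t₂
    intro v
    induction v using TensorProduct.induction_on with
    | zero => rw [smul_zero]; exact Submodule.zero_mem _
    | tmul z a =>
      obtain ⟨y, hy⟩ := ht₂ z
      exact ⟨y ⊗ₜ a, by rw [LinearMap.rTensor_tmul, hy, TensorProduct.smul_tmul']⟩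
    | add x y hx hy =>
      rw [smul_add]
      exact Submodule.add_mem _ hx hy
  · -- exactness at Y ⊗ A
    have hgf : ∀ w : Y ⊗[R] A, s₃ • (g.lTensor Y (f.lTensor Y w)) = 0 := by
      intro w
      induction w using TensorProduct.induction_on with
      | zero => simp
      | tmul y a =>
        rw [LinearMap.lTensor_tmul, LinearMap.lTensor_tmul, ← TensorProduct.tmul_smul,
          ← map_smul, LinearMap.mem_ker.mp (hs₃r (f a) ⟨a, rfl⟩), TensorProduct.tmul_zero]
      | add x y hx hy => rw [map_add, map_add, smul_add, hx, hy, add_zero]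
    set restL := sp * (sr * ((v₁ * (v₁ * s₃)) * u₃)) with hrestL
    have main : ∀ x ∈ LinearMap.ker (q.rTensor A), restL • x ∈ LinearMap.range (p.rTensor A) := by
      intro x hx
      rw [LinearMap.mem_ker] at hx
      set b := f.lTensor Y x with hb
      have hqb : q.rTensor B b = 0 := by
        have hcomm : q.rTensor B (f.lTensor Y x) = f.lTensor Z (q.rTensor A x) :=
          natural_square q f x
        rw [hb, hcomm, hx, map_zero]
      obtain ⟨b', hb'⟩ := hu₃k b (LinearMap.mem_ker.mpr hqb)
      set c' := g.lTensor X b' with hc'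
      have hpc : p.rTensor C c' = u₃ • (g.lTensor Y (f.lTensor Y x)) := by
        have hcomm : p.rTensor C (g.lTensor X b') = g.lTensor Y (p.rTensor B b') :=
          natural_square p g b'
        rw [hc', hcomm, hb', map_smul, hb]
      have h4 : p.rTensor C ((v₁ * s₃) • c') = 0 := by
        rw [map_smul, hpc, mul_smul, smul_comm s₃ u₃, smul_smul v₁, ← mul_smul,
          mul_comm v₁, mul_smul, mul_smul]
        rw [hgf x, smul_zero, smul_zero]
      have h5 := hv₁ _ (LinearMap.mem_ker.mpr h4)
      have h6 : g.lTensor X ((v₁ * (v₁ * s₃)) • b') = 0 := by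
        rw [map_smul, ← hc', mul_smul, h5]
      obtain ⟨a', ha'⟩ := RIGHT X _ h6
      have hpush : f.lTensor Y (p.rTensor A a')
          = f.lTensor Y ((sr * ((v₁ * (v₁ * s₃)) * u₃)) • x) := by
        have e1 : f.lTensor Y (p.rTensor A a') = p.rTensor B (f.lTensor X a') :=
          (natural_square p f a').symm
        rw [e1, ha', map_smul, map_smul, hb', hb, smul_smul, smul_smul, map_smul]
        congr 1
        ring
      have h7 : f.lTensor Y (p.rTensor A a' - (sr * ((v₁ * (v₁ * s₃)) * u₃)) • x) = 0 := by
        rw [map_sub, hpush, sub_self]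
      have h8 := PURE Y _ h7
      rw [smul_sub, sub_eq_zero] at h8
      refine ⟨sp • a', ?_⟩
      rw [map_smul, h8, smul_smul, hrestL]
    refine ⟨t₃ * restL, mul_mem ht₃S (mul_mem hspS (mul_mem hsrS
      (mul_mem (mul_mem hv₁S (mul_mem hv₁S hs₃S)) hu₃S))), ?_, ?_⟩
    · intro x hx
      obtain ⟨y, hy⟩ := main x hx
      exact ⟨t₃ • y, by rw [map_smul, hy, smul_smul]⟩
    · rintro x ⟨y, rfl⟩
      have easy : ∀ w : X ⊗[R] A, q.rTensor A (t₃ • p.rTensor A w) = 0 := by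
        intro w
        induction w using TensorProduct.induction_on with
        | zero => simp
        | tmul x a =>
          rw [LinearMap.rTensor_tmul, TensorProduct.smul_tmul', LinearMap.rTensor_tmul,
            LinearMap.mem_ker.mp (ht₃r (p x) ⟨x, rfl⟩), TensorProduct.zero_tmul]
        | add w₁ w₂ hw₁ hw₂ => rw [map_add, smul_add, map_add, hw₁, hw₂, add_zero]
      rw [LinearMap.mem_ker]
      have e2 : (t₃ * restL) • p.rTensor A y = t₃ • p.rTensor A (restL • y) := by
        rw [map_smul, smul_smul]
      rw [e2, easy]
end

section
/- Let R be a commutative ring and S a multiplicative subset of R. If F is a u-S-flat R-module, then the localization F_S is a flat module over the localization R_S. -/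
universe u v

/-!
Over `R_S`, flatness of `F_S` is the same as flatness over `R`, which is tested on ideals
`I ⊆ R`. Since `0 → I → R → R/I → 0` is exact, `u`-`S`-flatness gives one `s ∈ S` killing the
kernel of `F ⊗ I → F ⊗ R`. Localization at `S` annihilates such a kernel and commutes with
tensor products, so `F_S ⊗ I → F_S ⊗ R` is injective.
-/

open LinearMap TensorProduct

variable {R : Type u} [CommRing R] (S : Submonoid R)

theorem isUSShortExact_of_exact {A B C : Type*} [AddCommGroup A] [AddCommGroup B]
    [AddCommGroup C] [Module R A] [Module R B] [Module R C] {f : A →ₗ[R] B} {g : B →ₗ[R] C}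
    (hf : Function.Injective f) (hg : Function.Surjective g) (hfg : Function.Exact f g) :
    IsUSShortExact S f g := by
  refine ⟨⟨1, S.one_mem, fun a ha => ?_⟩, ⟨1, S.one_mem, fun c => ?_⟩,
    1, S.one_mem, fun b hb => ?_, fun b hb => ?_⟩
  · rw [one_smul]
    exact hf (by rwa [map_zero])
  · rw [one_smul]
    exact hg c
  · rw [one_smul, ← hfg.linearMap_ker_eq]
    exact hb
  · rw [one_smul, hfg.linearMap_ker_eq]
    exact hb

variable {S} in
theorem IsUSFlat.isUSTorsion_ker_rTensor {F : Type v} [AddCommGroup F] [Module R F]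
    (hF : IsUSFlat S F) {A B : Type v} [AddCommGroup A] [AddCommGroup B] [Module R A]
    [Module R B] {f : A →ₗ[R] B} (hf : Function.Injective f) :
    IsUSTorsion S (ker (f.rTensor F)) := by
  obtain ⟨⟨s, hs, hker⟩, -, -⟩ := hF A B (B ⧸ range f) f (range f).mkQ
    (isUSShortExact_of_exact S hf (range f).mkQ_surjective (exact_map_mkQ_range f))
  exact ⟨s, hs, fun x => Subtype.ext (hker x x.2)⟩

variable {S} in
theorem IsUSFlat.isUSTorsion_ker_lTensor {F : Type v} [AddCommGroup F] [Module R F]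
    (hF : IsUSFlat S F) {A B : Type v} [AddCommGroup A] [AddCommGroup B] [Module R A]
    [Module R B] {f : A →ₗ[R] B} (hf : Function.Injective f) :
    IsUSTorsion S (ker (f.lTensor F)) := by
  obtain ⟨s, hs, hker⟩ := hF.isUSTorsion_ker_rTensor hf
  refine ⟨s, hs, fun ⟨x, hx⟩ => Subtype.ext ?_⟩
  have hx' : TensorProduct.comm R F A x ∈ ker (f.rTensor F) := by
    rw [mem_ker, rTensor_comm, hx, map_zero]
  apply (TensorProduct.comm R F A).injective
  rw [Submodule.coe_smul, Submodule.coe_zero, map_smul, map_zero]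
  exact congr_arg Subtype.val (hker ⟨_, hx'⟩)

theorem IsLocalizedModule.map_injective_of_isUSTorsion_ker {M N M' N' : Type*}
    [AddCommGroup M] [AddCommGroup N] [AddCommGroup M'] [AddCommGroup N']
    [Module R M] [Module R N] [Module R M'] [Module R N']
    (f : M →ₗ[R] M') (g : N →ₗ[R] N') [IsLocalizedModule S f] [IsLocalizedModule S g]
    {h : M →ₗ[R] N} (hh : IsUSTorsion S (ker h)) :
    Function.Injective (IsLocalizedModule.map S f g h) := by
  obtain ⟨s, hs, hker⟩ := hh
  rw [injective_iff_map_eq_zero]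
  intro x hx
  obtain ⟨⟨m, t⟩, rfl⟩ := IsLocalizedModule.mk'_surjective S f x
  rw [Function.uncurry_apply_pair, IsLocalizedModule.map_mk',
    IsLocalizedModule.mk'_eq_zero'] at hx
  obtain ⟨u, hu⟩ := hx
  have hum : (u : R) • m ∈ ker h := by rw [mem_ker, map_smul, ← Submonoid.smul_def, hu]
  rw [Function.uncurry_apply_pair, IsLocalizedModule.mk'_eq_zero']
  refine ⟨⟨s, hs⟩ * u, ?_⟩
  rw [Submonoid.smul_def, Submonoid.coe_mul, mul_smul]
  exact congr_arg Subtype.val (hker ⟨_, hum⟩)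

theorem flat_localizedModule_of_isUSTorsion_ker_lTensor {F : Type*} [AddCommGroup F]
    [Module R F] (hF : ∀ I : Ideal R, IsUSTorsion S (ker (I.subtype.lTensor F))) :
    Module.Flat R (LocalizedModule S F) := by
  rw [Module.Flat.iff_lTensor_injective']
  intro I
  have hloc := IsLocalizedModule.map_injective_of_isUSTorsion_ker S
    (AlgebraTensorModule.rTensor R I (LocalizedModule.mkLinearMap S F))
    (AlgebraTensorModule.rTensor R R (LocalizedModule.mkLinearMap S F))
    (h := AlgebraTensorModule.lTensor R F I.subtype) (hF I)
  rwa [IsLocalizedModule.map_lTensor, AlgebraTensorModule.coe_lTensor] at hloc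

/-- If `F` is a `u`-`S`-flat `R`-module, then the localization `F_S` is a flat
module over `R_S`. -/
theorem localization_flat_of_isUSFlat {R : Type u} [CommRing R] (S : Submonoid R)
    (F : Type u) [AddCommGroup F] [Module R F] (hF : IsUSFlat S F) :
    Module.Flat (Localization S) (LocalizedModule S F) :=
  (Module.flat_iff_of_isLocalization (Localization S) S _).mpr <|
    flat_localizedModule_of_isUSTorsion_ker_lTensor S fun I =>
      hF.isUSTorsion_ker_lTensor I.injective_subtype
end

section
/- Let R be a commutative ring, S a multiplicative subset of R consisting of finitely many elements, and F an R-module. Then F is u-S-flat over R if and only if the localization F_S is a flat module over the localization R_S. -/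
universe u v

section USAux

open TensorProduct

variable {R : Type u} [CommRing R] (S : Submonoid R)

lemma USAux.exists_dvd_all (hS : (S : Set R).Finite) :
    ∃ s₀ ∈ S, ∀ s ∈ S, s ∣ s₀ :=
  ⟨∏ x ∈ hS.toFinset, x,
    Submonoid.prod_mem S fun x hx => hS.mem_toFinset.mp hx,
    fun s hs => Finset.dvd_prod_of_mem _ (hS.mem_toFinset.mpr hs)⟩

lemma USAux.smul_eq_zero_of_mem {P : Type*} [AddCommGroup P] [Module R P]
    [Module (Localization S) P] [IsScalarTower R (Localization S) P]
    {s : R} (hs : s ∈ S) {z : P} (h : s • z = 0) : z = 0 := by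
  have h1 : (algebraMap R (Localization S)) s • z = 0 := by
    rw [algebraMap_smul]; exact h
  exact ((IsLocalization.map_units (Localization S) ⟨s, hs⟩).smul_eq_zero).mp h1

lemma USAux.mem_of_smul_mem {P : Type u} [AddCommGroup P] [Module R P]
    [Module (Localization S) P] [IsScalarTower R (Localization S) P]
    {s : R} (hs : s ∈ S) {y : P} {p : Submodule (Localization S) P}
    (h : s • y ∈ p) : y ∈ p := by
  have hu := IsLocalization.map_units (Localization S) (⟨s, hs⟩ : S)
  have hy : y = ((hu.unit⁻¹ : (Localization S)ˣ) : Localization S) • (s • y) := by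
    rw [← algebraMap_smul (Localization S) s y, smul_smul, IsUnit.val_inv_mul, one_smul]
  rw [hy]
  exact p.smul_mem _ h

variable (F : Type u) [AddCommGroup F] [Module R F]

section Eta

variable {M : Type u} [AddCommGroup M] [Module R M]
  {M' : Type u} [AddCommGroup M'] [Module R M']
  [Module (Localization S) M'] [IsScalarTower R (Localization S) M']
  (ℓ : M →ₗ[R] M') [IsLocalizedModule S ℓ]

/-- The canonical equivalence `(M ⊗[R] F)_S ≃ M' ⊗[R_S] F_S`. -/
noncomputable def USAux.etaEquiv :
    LocalizedModule S (M ⊗[R] F) ≃ₗ[Localization S]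
      M' ⊗[Localization S] LocalizedModule S F :=
  (IsLocalizedModule.isBaseChange S (Localization S)
      (LocalizedModule.mkLinearMap S (M ⊗[R] F))).equiv.symm ≪≫ₗ
    TensorProduct.AlgebraTensorModule.distribBaseChange R (Localization S) M F ≪≫ₗ
    TensorProduct.congr ((IsLocalizedModule.isBaseChange S (Localization S) ℓ).equiv)
      ((IsLocalizedModule.isBaseChange S (Localization S)
          (LocalizedModule.mkLinearMap S F)).equiv)

/-- The canonical map `M ⊗[R] F → M' ⊗[R_S] F_S`. -/
noncomputable def USAux.eta :
    M ⊗[R] F →ₗ[R] M' ⊗[Localization S] LocalizedModule S F :=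
  (((USAux.etaEquiv S F ℓ).restrictScalars R : _ ≃ₗ[R] _) :
      LocalizedModule S (M ⊗[R] F) →ₗ[R] M' ⊗[Localization S] LocalizedModule S F) ∘ₗ
    LocalizedModule.mkLinearMap S (M ⊗[R] F)

instance USAux.instEta : IsLocalizedModule S (USAux.eta S F ℓ) :=
  IsLocalizedModule.of_linearEquiv S (LocalizedModule.mkLinearMap S (M ⊗[R] F)) _

lemma USAux.eta_tmul (m : M) (x : F) :
    USAux.eta S F ℓ (m ⊗ₜ x) = ℓ m ⊗ₜ LocalizedModule.mk x 1 := by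
  have h1 : (IsLocalizedModule.isBaseChange S (Localization S)
      (LocalizedModule.mkLinearMap S (M ⊗[R] F))).equiv.symm
        (LocalizedModule.mk (m ⊗ₜ x) 1) = 1 ⊗ₜ (m ⊗ₜ x) := by
    rw [LinearEquiv.symm_apply_eq, IsBaseChange.equiv_tmul, one_smul]; rfl
  have h2 : (TensorProduct.AlgebraTensorModule.distribBaseChange R (Localization S) M F) (1 ⊗ₜ (m ⊗ₜ x)) =
      (1 ⊗ₜ m) ⊗ₜ (1 ⊗ₜ x) := by
    rw [eq_comm, ← LinearEquiv.symm_apply_eq]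
    simp [TensorProduct.AlgebraTensorModule.distribBaseChange,
      TensorProduct.AlgebraTensorModule.cancelBaseChange]
  simp only [USAux.eta, LinearMap.coe_comp, Function.comp_apply, LinearEquiv.coe_coe,
    LinearEquiv.restrictScalars_apply, USAux.etaEquiv, LinearEquiv.trans_apply, h1, h2,
    TensorProduct.congr_tmul, IsBaseChange.equiv_tmul, one_smul,
    LocalizedModule.mkLinearMap_apply]

lemma USAux.eta_natural {N : Type u} [AddCommGroup N] [Module R N]
    {N' : Type u} [AddCommGroup N'] [Module R N']
    [Module (Localization S) N'] [IsScalarTower R (Localization S) N']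
    (ℓ' : N →ₗ[R] N') [IsLocalizedModule S ℓ']
    (f : M →ₗ[R] N) (f' : M' →ₗ[Localization S] N')
    (hcomm : ∀ m, f' (ℓ m) = ℓ' (f m)) (z : M ⊗[R] F) :
    LinearMap.rTensor (LocalizedModule S F) f' (USAux.eta S F ℓ z) =
      USAux.eta S F ℓ' (LinearMap.rTensor F f z) := by
  induction z using TensorProduct.induction_on with
  | zero => simp
  | tmul m x => simp [USAux.eta_tmul, LinearMap.rTensor_tmul, hcomm]
  | add a b ha hb => simp only [map_add, ha, hb]

end Eta

end USAux

set_option maxHeartbeats 1000000 in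
/-- If the multiplicative subset `S` consists of finitely many elements, then an
`R`-module `F` is `u`-`S`-flat if and only if `F_S` is a flat `R_S`-module. -/
theorem isUSFlat_iff_localization_flat_of_finite {R : Type u} [CommRing R] (S : Submonoid R)
    (hS : (S : Set R).Finite)
    (F : Type u) [AddCommGroup F] [Module R F] :
    IsUSFlat S F ↔ Module.Flat (Localization S) (LocalizedModule S F) := by
  obtain ⟨s₀, hs₀S, hs₀⟩ := USAux.exists_dvd_all S hS
  constructor
  · -- u-S-flat implies flat localization
    intro hF
    rw [Module.Flat.iff_rTensor_injective']
    intro I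
    haveI : IsLocalizedModule S (LinearMap.id : I →ₗ[R] I) :=
      isLocalizedModule_id S I (Localization S)
    haveI : IsLocalizedModule S (LinearMap.id : Localization S →ₗ[R] Localization S) :=
      isLocalizedModule_id S (Localization S) (Localization S)
    set f₀ : I →ₗ[R] Localization S := (I.subtype).restrictScalars R with hf₀def
    have hf₀inj : Function.Injective f₀ := Subtype.val_injective
    have hUS : IsUSShortExact S f₀ (LinearMap.range f₀).mkQ := by
      refine ⟨⟨1, S.one_mem, fun a ha => ?_⟩, ⟨1, S.one_mem, fun c => ?_⟩,
        1, S.one_mem, fun b hb => ?_, fun b hb => ?_⟩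
      · rw [one_smul]
        exact hf₀inj (by simpa using ha)
      · rw [one_smul]
        exact Submodule.mkQ_surjective _ c
      · rw [one_smul]
        rwa [LinearMap.mem_ker, Submodule.mkQ_apply, Submodule.Quotient.mk_eq_zero] at hb
      · rw [one_smul, LinearMap.mem_ker, Submodule.mkQ_apply, Submodule.Quotient.mk_eq_zero]
        exact hb
    obtain ⟨⟨s, hsS, hker⟩, -, -⟩ := hF _ _ _ f₀ (LinearMap.range f₀).mkQ hUS
    rw [injective_iff_map_eq_zero]
    intro z hz
    obtain ⟨⟨w, t⟩, hw⟩ :=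
      IsLocalizedModule.surj S (USAux.eta S F (LinearMap.id : I →ₗ[R] I)) z
    have hnat := USAux.eta_natural S F (LinearMap.id : I →ₗ[R] I)
      (LinearMap.id : Localization S →ₗ[R] Localization S) f₀ I.subtype (fun m => rfl) w
    have h0 : USAux.eta S F (LinearMap.id : Localization S →ₗ[R] Localization S)
        (LinearMap.rTensor F f₀ w) = 0 := by
      rw [← hnat, ← hw, Submonoid.smul_def, LinearMap.map_smul_of_tower, hz, smul_zero]
    obtain ⟨t', ht'⟩ := (IsLocalizedModule.eq_zero_iff S
      (f := USAux.eta S F (LinearMap.id : Localization S →ₗ[R] Localization S))).mp h0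
    have hker' : (t' : R) • w ∈ LinearMap.ker (LinearMap.rTensor F f₀) := by
      rw [LinearMap.mem_ker, LinearMap.map_smul]
      rwa [Submonoid.smul_def] at ht'
    have h2 : s • ((t' : R) • w) = 0 := hker _ hker'
    have h3 : (s * (t' : R) * (t : R)) • z = 0 := by
      have : (s * (t' : R) * (t : R)) • z = ((s * (t' : R)) • ((t : R) • z)) := by
        rw [mul_smul]
      rw [this, ← Submonoid.smul_def t z, hw,
        ← LinearMap.map_smul (USAux.eta S F (LinearMap.id : I →ₗ[R] I)) (s * (t' : R)) w,
        mul_smul, h2, map_zero]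
    exact USAux.smul_eq_zero_of_mem S (mul_mem (mul_mem hsS t'.2) t.2) h3
  · -- flat localization implies u-S-flat
    intro hflat A B C _ _ _ _ _ _ f g hex
    haveI := hflat
    obtain ⟨⟨s₁, hs₁, hker1⟩, ⟨s₂, hs₂, hsur⟩, s₃, hs₃, hmid₁, hmid₂⟩ := hex
    -- injectivity of the localized map
    have hfSinj : Function.Injective (LocalizedModule.map S f) := by
      rw [injective_iff_map_eq_zero]
      intro z hz
      obtain ⟨⟨a, t⟩, ha⟩ := IsLocalizedModule.surj S (LocalizedModule.mkLinearMap S A) z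
      have h1 : (LocalizedModule.mk (f a) 1 : LocalizedModule S B) = 0 := by
        have : LocalizedModule.map S f (t • z) = 0 := by
          rw [Submonoid.smul_def, LinearMap.map_smul_of_tower, hz, smul_zero]
        rwa [ha, LocalizedModule.mkLinearMap_apply, LocalizedModule.map_mk] at this
      obtain ⟨u, hu⟩ := (IsLocalizedModule.eq_zero_iff S
        (f := LocalizedModule.mkLinearMap S B)).mp h1
      have hu' : f ((u : R) • a) = 0 := by
        rw [LinearMap.map_smul]
        rwa [Submonoid.smul_def] at hu
      have h2 : s₁ • ((u : R) • a) = 0 := hker1 _ (by rwa [LinearMap.mem_ker])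
      have h3 : (s₁ * (u : R) * (t : R)) • z = 0 := by
        rw [mul_smul, ← Submonoid.smul_def t z, ha, LocalizedModule.mkLinearMap_apply,
          LocalizedModule.smul'_mk, mul_smul, h2, LocalizedModule.zero_mk]
      exact USAux.smul_eq_zero_of_mem S (mul_mem (mul_mem hs₁ u.2) t.2) h3
    -- exactness of the localized sequence
    have hexS : Function.Exact (LocalizedModule.map S f) (LocalizedModule.map S g) := by
      intro y
      constructor
      · intro hy
        obtain ⟨⟨b, t⟩, hb⟩ := IsLocalizedModule.surj S (LocalizedModule.mkLinearMap S B) y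
        have h1 : (LocalizedModule.mk (g b) 1 : LocalizedModule S C) = 0 := by
          have : LocalizedModule.map S g (t • y) = 0 := by
            rw [Submonoid.smul_def, LinearMap.map_smul_of_tower, hy, smul_zero]
          rwa [hb, LocalizedModule.mkLinearMap_apply, LocalizedModule.map_mk] at this
        obtain ⟨u, hu⟩ := (IsLocalizedModule.eq_zero_iff S
          (f := LocalizedModule.mkLinearMap S C)).mp h1
        have hu' : g ((u : R) • b) = 0 := by
          rw [LinearMap.map_smul]
          rwa [Submonoid.smul_def] at hu
        obtain ⟨a, hab⟩ := hmid₁ _ (by rwa [LinearMap.mem_ker])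
        have hmem : (s₃ * (u : R) * (t : R)) • y ∈ LinearMap.range (LocalizedModule.map S f) := by
          refine LinearMap.mem_range.mpr ⟨LocalizedModule.mk a 1, ?_⟩
          rw [LocalizedModule.map_mk, hab, mul_smul, ← Submonoid.smul_def t y, hb,
            LocalizedModule.mkLinearMap_apply, LocalizedModule.smul'_mk, mul_smul]
        have := USAux.mem_of_smul_mem S (mul_mem (mul_mem hs₃ u.2) t.2) hmem
        obtain ⟨x, hx⟩ := this
        exact ⟨x, hx⟩
      · rintro ⟨x, rfl⟩
        obtain ⟨⟨a, t⟩, ha⟩ := IsLocalizedModule.surj S (LocalizedModule.mkLinearMap S A) x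
        have hg : s₃ • g (f a) = 0 := by
          have h := hmid₂ (f a) ⟨a, rfl⟩
          rwa [LinearMap.mem_ker, LinearMap.map_smul] at h
        have h1 : (s₃ * (t : R)) • (LocalizedModule.map S g (LocalizedModule.map S f x)) = 0 := by
          have hx : LocalizedModule.map S g (LocalizedModule.map S f ((t : R) • x)) =
              LocalizedModule.mk (g (f a)) 1 := by
            rw [← Submonoid.smul_def, ha, LocalizedModule.mkLinearMap_apply,
              LocalizedModule.map_mk, LocalizedModule.map_mk]
          rw [mul_smul,
            ← LinearMap.map_smul_of_tower (LocalizedModule.map S g) (t : R)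
              (LocalizedModule.map S f x),
            ← LinearMap.map_smul_of_tower (LocalizedModule.map S f) (t : R) x, hx,
            LocalizedModule.smul'_mk, hg, LocalizedModule.zero_mk]
        exact USAux.smul_eq_zero_of_mem S (mul_mem hs₃ t.2) h1
    -- now assemble the three components
    refine ⟨⟨s₀, hs₀S, fun z hz => ?_⟩, ⟨s₂, hs₂, fun y => ?_⟩,
      s₀ * s₃, mul_mem hs₀S hs₃, fun z hz => ?_, fun y hy => ?_⟩
    · -- kernel of rTensor F f is uniformly torsion
      have hpt : ∃ s ∈ S, s • z = 0 := by
        have hnat := USAux.eta_natural S F (LocalizedModule.mkLinearMap S A)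
          (LocalizedModule.mkLinearMap S B) f (LocalizedModule.map S f)
          (fun a => by rw [LocalizedModule.mkLinearMap_apply, LocalizedModule.map_mk]; rfl) z
        rw [LinearMap.mem_ker] at hz
        rw [hz, map_zero] at hnat
        have hinj := Module.Flat.rTensor_preserves_injective_linearMap
          (M := LocalizedModule S F) (LocalizedModule.map S f) hfSinj
        have heta0 : USAux.eta S F (LocalizedModule.mkLinearMap S A) z = 0 :=
          (injective_iff_map_eq_zero _).mp hinj _ hnat
        obtain ⟨u, hu⟩ := (IsLocalizedModule.eq_zero_iff S
          (f := USAux.eta S F (LocalizedModule.mkLinearMap S A))).mp heta0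
        exact ⟨u, u.2, by rwa [Submonoid.smul_def] at hu⟩
      obtain ⟨s, hs, h⟩ := hpt
      obtain ⟨c, hc⟩ := hs₀ s hs
      rw [hc, mul_comm, mul_smul, h, smul_zero]
    · -- s₂ • (C ⊗ F) is in the range of rTensor F g
      induction y using TensorProduct.induction_on with
      | zero => rw [smul_zero]; exact Submodule.zero_mem _
      | tmul c x =>
        obtain ⟨b, hb⟩ := hsur c
        exact LinearMap.mem_range.mpr
          ⟨b ⊗ₜ x, by rw [LinearMap.rTensor_tmul, hb, ← TensorProduct.smul_tmul']⟩
      | add a b hA hB =>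
        rw [smul_add]
        exact Submodule.add_mem _ hA hB
    · -- s₀ * s₃ • ker (rTensor F g) ⊆ range (rTensor F f)
      have hpt : ∃ s ∈ S, s • z ∈ LinearMap.range (LinearMap.rTensor F f) := by
        have hnat := USAux.eta_natural S F (LocalizedModule.mkLinearMap S B)
          (LocalizedModule.mkLinearMap S C) g (LocalizedModule.map S g)
          (fun b => by rw [LocalizedModule.mkLinearMap_apply, LocalizedModule.map_mk]; rfl) z
        rw [LinearMap.mem_ker] at hz
        rw [hz, map_zero] at hnat
        have hexT := Module.Flat.rTensor_exact (LocalizedModule S F) hexS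
        obtain ⟨w, hw⟩ := (hexT _).mp hnat
        obtain ⟨⟨w', t⟩, hwt⟩ :=
          IsLocalizedModule.surj S (USAux.eta S F (LocalizedModule.mkLinearMap S A)) w
        have hnat' := USAux.eta_natural S F (LocalizedModule.mkLinearMap S A)
          (LocalizedModule.mkLinearMap S B) f (LocalizedModule.map S f)
          (fun a => by rw [LocalizedModule.mkLinearMap_apply, LocalizedModule.map_mk]; rfl) w'
        have heq : USAux.eta S F (LocalizedModule.mkLinearMap S B) ((t : R) • z) =
            USAux.eta S F (LocalizedModule.mkLinearMap S B) (LinearMap.rTensor F f w') := by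
          rw [LinearMap.map_smul, ← hnat', ← hwt, Submonoid.smul_def,
            LinearMap.map_smul_of_tower, hw]
        obtain ⟨c, hc⟩ := IsLocalizedModule.exists_of_eq (S := S)
          (f := USAux.eta S F (LocalizedModule.mkLinearMap S B)) heq
        refine ⟨(c : R) * (t : R), mul_mem c.2 t.2,
          LinearMap.mem_range.mpr ⟨(c : R) • w', ?_⟩⟩
        rw [LinearMap.map_smul, mul_smul, ← Submonoid.smul_def c, ← Submonoid.smul_def c]
        exact hc.symm
      obtain ⟨s, hs, h⟩ := hpt
      obtain ⟨c, hc⟩ := hs₀ s hs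
      rw [mul_comm s₀ s₃, mul_smul, hc, mul_comm s c, mul_smul]
      exact Submodule.smul_mem _ _ (Submodule.smul_mem _ _ h)
    · -- s₀ * s₃ • range (rTensor F f) ⊆ ker (rTensor F g)
      obtain ⟨w, rfl⟩ := hy
      have key : s₃ • (LinearMap.rTensor F g (LinearMap.rTensor F f w)) = 0 := by
        induction w using TensorProduct.induction_on with
        | zero => rw [map_zero, map_zero, smul_zero]
        | tmul a x =>
          have hg0 : s₃ • g (f a) = 0 := by
            have h := hmid₂ (f a) ⟨a, rfl⟩
            rwa [LinearMap.mem_ker, LinearMap.map_smul] at h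
          rw [LinearMap.rTensor_tmul, LinearMap.rTensor_tmul, TensorProduct.smul_tmul', hg0,
            TensorProduct.zero_tmul]
        | add a b hA hB =>
          rw [map_add, map_add, smul_add, hA, hB, add_zero]
      rw [LinearMap.mem_ker, LinearMap.map_smul, mul_smul, key, smul_zero]
end

section
/- Let R be a commutative ring and F an R-module. The following are equivalent: (1) F is flat; (2) F is u-(R∖p)-flat for every prime ideal p of R; (3) F is u-(R∖m)-flat for every maximal ideal m of R. -/
universe u v

section Aux

variable {R : Type u} [CommRing R]

/-- Scalars killing a module kill its tensor products. -/
theorem aux_smul_tensor_zero {M F : Type v} [AddCommGroup M] [Module R M]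
    [AddCommGroup F] [Module R F] {s : R} (h : ∀ m : M, s • m = 0)
    (y : TensorProduct R M F) : s • y = 0 := by
  induction y using TensorProduct.induction_on with
  | zero => simp
  | tmul m x => rw [TensorProduct.smul_tmul', h]; simp
  | add a b ha hb => rw [smul_add, ha, hb, add_zero]

theorem aux_rTensor_smul {A B F : Type v} [AddCommGroup A] [AddCommGroup B]
    [AddCommGroup F] [Module R A] [Module R B] [Module R F]
    (f : A →ₗ[R] B) (s : R) :
    LinearMap.rTensor F (s • f) = s • LinearMap.rTensor F f := by
  apply TensorProduct.ext'
  intro a x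
  simp [TensorProduct.smul_tmul']

/-- A flat module is `u`-`S`-flat for every multiplicative set `S`. -/
theorem aux_flat_isUSFlat (S : Submonoid R) (F : Type u) [AddCommGroup F] [Module R F]
    [Module.Flat R F] : IsUSFlat S F := by
  intro A B C _ _ _ _ _ _ f g hse
  obtain ⟨⟨s₁, hs₁S, hs₁⟩, ⟨s₂, hs₂S, hs₂⟩, ⟨s₃, hs₃S, h₃₁, h₃₂⟩⟩ := hse
  refine ⟨⟨s₁, hs₁S, ?_⟩, ⟨s₂, hs₂S, ?_⟩, ⟨s₃, hs₃S, ?_, ?_⟩⟩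
  · -- kernel of rTensor f is killed by s₁
    intro y hy
    set K := LinearMap.ker f with hK
    have hfac : f = (K.liftQ f le_rfl).comp K.mkQ := by
      ext a; simp
    have hinj : Function.Injective (K.liftQ f le_rfl) := by
      rw [← LinearMap.ker_eq_bot]
      exact Submodule.ker_liftQ_eq_bot _ _ _ le_rfl
    have hinj' : Function.Injective (LinearMap.rTensor F (K.liftQ f le_rfl)) :=
      Module.Flat.rTensor_preserves_injective_linearMap _ hinj
    have hy' : LinearMap.rTensor F K.mkQ y = 0 := by
      apply hinj'
      rw [map_zero, ← LinearMap.rTensor_comp_apply, ← hfac]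
      exact hy
    have hmem : y ∈ LinearMap.range (LinearMap.rTensor F K.subtype) := by
      rw [← rTensor_mkQ]
      exact hy'
    obtain ⟨z, rfl⟩ := hmem
    rw [← map_smul]
    have : s₁ • z = 0 := by
      apply aux_smul_tensor_zero
      intro m
      ext
      exact hs₁ m.1 m.2
    rw [this, map_zero]
  · -- surjectivity up to s₂
    intro t
    set Q := LinearMap.range g with hQ
    have hzero : s₂ • Q.mkQ = 0 := by
      ext c
      simp only [LinearMap.smul_apply, LinearMap.zero_apply, ← map_smul,
        Submodule.mkQ_apply]
      exact (Submodule.Quotient.mk_eq_zero _).mpr (hs₂ c)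
    have hker : LinearMap.rTensor F Q.mkQ (s₂ • t) = 0 := by
      rw [map_smul, ← LinearMap.smul_apply, ← aux_rTensor_smul, hzero]
      simp
    have hexact : LinearMap.ker (LinearMap.rTensor F Q.mkQ)
        = LinearMap.range (LinearMap.rTensor F g) := by
      rw [← LinearMap.exact_iff]
      refine rTensor_exact F ?_ (Submodule.mkQ_surjective Q)
      rw [LinearMap.exact_iff, Submodule.ker_mkQ]
    rw [← hexact]
    exact hker
  · -- s₃ • ker(rTensor g) ⊆ range(rTensor f)
    intro x hx
    set K := LinearMap.ker g with hK
    have hfac : g = (K.liftQ g le_rfl).comp K.mkQ := by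
      ext b; simp
    have hinj : Function.Injective (K.liftQ g le_rfl) := by
      rw [← LinearMap.ker_eq_bot]
      exact Submodule.ker_liftQ_eq_bot _ _ _ le_rfl
    have hinj' : Function.Injective (LinearMap.rTensor F (K.liftQ g le_rfl)) :=
      Module.Flat.rTensor_preserves_injective_linearMap _ hinj
    have hx' : LinearMap.rTensor F K.mkQ x = 0 := by
      apply hinj'
      rw [map_zero, ← LinearMap.rTensor_comp_apply, ← hfac]
      exact hx
    have hmem : x ∈ LinearMap.range (LinearMap.rTensor F K.subtype) := by
      rw [← rTensor_mkQ]
      exact hx'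
    obtain ⟨y, rfl⟩ := hmem
    -- the map K → range f, k ↦ s₃ • k
    set φ : K →ₗ[R] LinearMap.range f :=
      LinearMap.codRestrict (LinearMap.range f) (s₃ • K.subtype)
        (fun k => h₃₁ k.1 k.2) with hφ
    have hcomp : (LinearMap.range f).subtype.comp φ = s₃ • K.subtype := by
      ext k; rfl
    have step1 : s₃ • LinearMap.rTensor F K.subtype y
        = LinearMap.rTensor F ((LinearMap.range f).subtype.comp φ) y := by
      rw [hcomp, aux_rTensor_smul]; rfl
    obtain ⟨z, hz⟩ := LinearMap.rTensor_surjective F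
      (g := f.rangeRestrict) f.surjective_rangeRestrict (LinearMap.rTensor F φ y)
    refine ⟨z, ?_⟩
    have hfac2 : f = (LinearMap.range f).subtype.comp f.rangeRestrict := by
      ext a; rfl
    rw [hfac2, LinearMap.rTensor_comp, LinearMap.comp_apply, hz, step1,
      LinearMap.rTensor_comp, LinearMap.comp_apply]
  · -- s₃ • range(rTensor f) ⊆ ker(rTensor g)
    rintro b ⟨y, rfl⟩
    have hzero : s₃ • g.comp f = 0 := by
      ext a
      have := h₃₂ (f a) ⟨a, rfl⟩
      rw [LinearMap.mem_ker] at this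
      simpa using this
    rw [LinearMap.mem_ker, map_smul, ← LinearMap.rTensor_comp_apply,
      ← LinearMap.smul_apply, ← aux_rTensor_smul, hzero]
    simp

/-- If `F` is `u`-`(R∖m)`-flat at every maximal ideal `m`, then `F` is flat. -/
theorem aux_usflat_flat (F : Type u) [AddCommGroup F] [Module R F]
    (h : ∀ (m : Ideal R) (hm : m.IsMaximal), IsUSFlat (@Ideal.primeCompl R _ m hm.isPrime) F) :
    Module.Flat R F := by
  rw [Module.Flat.iff_rTensor_injective']
  intro I
  rw [← LinearMap.ker_eq_bot]
  rw [eq_bot_iff]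
  intro x hx
  -- the annihilator of x
  set J : Ideal R := LinearMap.ker (LinearMap.toSpanSingleton R _ x) with hJ
  have hJtop : J = ⊤ := by
    by_contra hne
    obtain ⟨m, hm, hle⟩ := Ideal.exists_le_maximal J hne
    haveI := hm.isPrime
    have hses : IsUSShortExact (@Ideal.primeCompl R _ m hm.isPrime) I.subtype I.mkQ := by
      refine ⟨⟨1, Submonoid.one_mem _, ?_⟩, ⟨1, Submonoid.one_mem _, ?_⟩,
        ⟨1, Submonoid.one_mem _, ?_, ?_⟩⟩
      · intro a ha
        rw [Submodule.ker_subtype] at ha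
        simpa using ha
      · intro c
        obtain ⟨b, hb⟩ := Submodule.mkQ_surjective I c
        exact ⟨b, by simp [hb]⟩
      · intro b hb
        rw [LinearMap.mem_ker, Submodule.mkQ_apply, Submodule.Quotient.mk_eq_zero] at hb
        exact ⟨⟨b, hb⟩, by simp⟩
      · rintro b ⟨a, rfl⟩
        rw [LinearMap.mem_ker, Submodule.mkQ_apply, one_smul, Submodule.Quotient.mk_eq_zero]
        exact a.2
    obtain ⟨⟨s, hsm, hs⟩, -, -⟩ := h m hm _ _ _ I.subtype I.mkQ hses
    exact hsm (hle (hs x hx))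
  have h1 : (1 : R) ∈ J := hJtop ▸ Submodule.mem_top
  have : (1 : R) • x = 0 := h1
  rw [one_smul] at this
  simp [this]

end Aux

/-- An `R`-module `F` is flat iff `F` is `u`-`(R∖p)`-flat for every prime ideal `p`
iff `F` is `u`-`(R∖m)`-flat for every maximal ideal `m`. -/
theorem flat_iff_uSFlat_at_primes {R : Type u} [CommRing R]
    (F : Type u) [AddCommGroup F] [Module R F] :
    (Module.Flat R F ↔
      ∀ (p : Ideal R) (hp : p.IsPrime), IsUSFlat (@Ideal.primeCompl R _ p hp) F) ∧
    (Module.Flat R F ↔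
      ∀ (m : Ideal R) (hm : m.IsMaximal), IsUSFlat (@Ideal.primeCompl R _ m hm.isPrime) F) := by
  constructor
  · constructor
    · intro hF p hp
      exact aux_flat_isUSFlat _ F
    · intro hp
      exact aux_usflat_flat F (fun m hm => hp m hm.isPrime)
  · constructor
    · intro hF m hm
      exact aux_flat_isUSFlat _ F
    · intro hm
      exact aux_usflat_flat F hm
end

section
/- Let R be a commutative ring and S a multiplicative subset of R. Then R is u-S-von Neumann regular if and only if there exists s ∈ S such that for every a ∈ R there is an idempotent e ∈ R with s • ⟨a⟩ ⊆ ⟨e⟩ ⊆ ⟨a⟩ (the class of all principal ideals of R is u-S-generated by idempotents). -/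
universe u v

/-- A ring `R` is `u`-`S`-von Neumann regular if there exists `s ∈ S` such that
for every `a ∈ R` there is `r ∈ R` with `s * a = r * a ^ 2`. -/
def IsUSVonNeumannRegular {R : Type u} [CommRing R] (S : Submonoid R) : Prop :=
  ∃ s ∈ S, ∀ a : R, ∃ r : R, s * a = r * a ^ 2

/-- `R` is `u`-`S`-von Neumann regular if and only if there exists `s ∈ S` such that
every principal ideal `⟨a⟩` contains an idempotent `e` with `s • ⟨a⟩ ⊆ ⟨e⟩ ⊆ ⟨a⟩`,
i.e. the class of all principal ideals of `R` is `u`-`S`-generated by idempotents. -/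
theorem isUSVonNeumannRegular_iff_principal_uS_generated_by_idempotents
    {R : Type u} [CommRing R] (S : Submonoid R) :
    IsUSVonNeumannRegular S ↔
      ∃ s ∈ S, ∀ a : R, ∃ e : R, IsIdempotentElem e ∧
        (∀ x ∈ Ideal.span {a}, s * x ∈ Ideal.span {e}) ∧
        Ideal.span {e} ≤ Ideal.span {a} := by
  constructor
  · rintro ⟨s, hs, hvnr⟩
    refine ⟨s ^ 3, pow_mem hs 3, fun a => ?_⟩
    obtain ⟨r, hr⟩ := hvnr a
    obtain ⟨p, hp⟩ := hvnr (s * (r * a))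
    -- x := r * a satisfies x * x = s * x
    have hx : (r * a) * (r * a) = s * (r * a) := by linear_combination (-r) * hr
    -- key relation : s^2 * x = p * s^3 * x
    have hP : s ^ 2 * (r * a) = p * s ^ 3 * (r * a) := by
      linear_combination hp + (p * s ^ 2) * hx
    refine ⟨s ^ 2 * p ^ 3 * (r * a), ?_, ?_, ?_⟩
    · show (s ^ 2 * p ^ 3 * (r * a)) * (s ^ 2 * p ^ 3 * (r * a)) = s ^ 2 * p ^ 3 * (r * a)
      linear_combination (s ^ 4 * p ^ 6) * hx -
        (s ^ 2 * p ^ 5 + s * p ^ 4 + p ^ 3) * hP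
    · -- s^3 ⟨a⟩ ⊆ ⟨e⟩
      have h3 : s ^ 3 * (s ^ 2 * p ^ 3 * (r * a)) = s ^ 2 * (r * a) := by
        linear_combination (-(s ^ 2 * p ^ 2 + s * p + 1)) * hP
      intro w hw
      rw [Ideal.mem_span_singleton] at hw ⊢
      obtain ⟨t, ht⟩ := hw
      refine ⟨s ^ 3 * a * t, ?_⟩
      linear_combination (s ^ 3) * ht - (a * t) * h3 + (s ^ 2 * t) * hr
    · -- ⟨e⟩ ⊆ ⟨a⟩
      exact Ideal.span_singleton_le_span_singleton.mpr ⟨s ^ 2 * p ^ 3 * r, by ring⟩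
  · rintro ⟨s, hs, h⟩
    refine ⟨s, hs, fun a => ?_⟩
    obtain ⟨e, he, h1, h2⟩ := h a
    have hsa : s * a ∈ Ideal.span {e} :=
      h1 a (Ideal.mem_span_singleton_self a)
    rw [Ideal.mem_span_singleton] at hsa
    obtain ⟨u, hu⟩ := hsa
    have hea : a ∣ e :=
      Ideal.mem_span_singleton.mp (h2 (Ideal.mem_span_singleton_self e))
    obtain ⟨v, hv⟩ := hea
    refine ⟨s * v, ?_⟩
    have hee : e * e = e := he
    calc s * a = e * u := hu
      _ = (e * e) * u := by rw [hee]
      _ = e * (e * u) := by ring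
      _ = e * (s * a) := by rw [← hu]
      _ = (a * v) * (s * a) := by rw [← hv]
      _ = (s * v) * a ^ 2 := by ring
end

section
/- Let R be a commutative ring and S a regular multiplicative subset of R, i.e., every element of S is a non-zero-divisor of R. Then R is u-S-von Neumann regular if and only if R is von Neumann regular. -/
universe u v

/-- If every element of `S` is a non-zero-divisor of `R`, then `R` is
`u`-`S`-von Neumann regular if and only if `R` is von Neumann regular. -/
theorem isUSVonNeumannRegular_iff_vonNeumannRegular_of_regular
    {R : Type u} [CommRing R] (S : Submonoid R)
    (hS : ∀ s ∈ S, ∀ x : R, s * x = 0 → x = 0) :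
    IsUSVonNeumannRegular S ↔ ∀ a : R, ∃ r : R, a = r * a ^ 2 := by
  constructor
  · rintro ⟨s, hs, h⟩ a
    obtain ⟨r, hr⟩ := h (s * a)
    refine ⟨r, ?_⟩
    have hkey : (s * s) * (a - r * a ^ 2) = 0 := by
      have : s * (s * a) = r * (s * a) ^ 2 := hr
      ring_nf
      ring_nf at this
      linear_combination this
    have := hS (s * s) (S.mul_mem hs hs) _ hkey
    exact sub_eq_zero.mp this
  · intro h
    exact ⟨1, S.one_mem, fun a => by
      obtain ⟨r, hr⟩ := h a; exact ⟨r, by rw [one_mul, ← hr]⟩⟩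
end

section
/- Let R be a commutative ring. The following are equivalent: (1) R is von Neumann regular; (2) R is u-(R∖p)-von Neumann regular for every prime ideal p of R; (3) R is u-(R∖m)-von Neumann regular for every maximal ideal m of R. -/
universe u v

lemma usvnr_of_vnr {R : Type u} [CommRing R] (h : ∀ a : R, ∃ r : R, a = r * a ^ 2)
    (S : Submonoid R) : IsUSVonNeumannRegular S := by
  refine ⟨1, S.one_mem, fun a => ?_⟩
  obtain ⟨r, hr⟩ := h a
  exact ⟨r, by rw [one_mul, ← hr]⟩

lemma vnr_of_usvnr_max {R : Type u} [CommRing R]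
    (h : ∀ (m : Ideal R) (hm : m.IsMaximal),
        IsUSVonNeumannRegular (@Ideal.primeCompl R _ m hm.isPrime)) :
    ∀ a : R, ∃ r : R, a = r * a ^ 2 := by
  intro a
  let I : Ideal R :=
    { carrier := {x | ∃ r : R, x * a = r * a ^ 2}
      add_mem' := by
        rintro x y ⟨r, hr⟩ ⟨t, ht⟩
        exact ⟨r + t, by rw [add_mul, hr, ht, add_mul]⟩
      zero_mem' := ⟨0, by ring⟩
      smul_mem' := by
        rintro c x ⟨r, hr⟩
        exact ⟨c * r, by rw [smul_eq_mul, mul_assoc, hr, mul_assoc]⟩ }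
  have hI : I = ⊤ := by
    by_contra hne
    obtain ⟨m, hm, hIm⟩ := Ideal.exists_le_maximal I hne
    obtain ⟨s, hs, hsa⟩ := h m hm
    obtain ⟨r, hr⟩ := hsa a
    exact hs (hIm ⟨r, hr⟩)
  have : (1 : R) ∈ I := hI ▸ Submodule.mem_top
  obtain ⟨r, hr⟩ := this
  exact ⟨r, by rw [← hr, one_mul]⟩

/-- `R` is von Neumann regular iff `R` is `u`-`(R∖p)`-von Neumann regular for every
prime ideal `p` iff `R` is `u`-`(R∖m)`-von Neumann regular for every maximal ideal `m`. -/
theorem vonNeumannRegular_iff_uS_vnr_at_primes {R : Type u} [CommRing R] :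
    ((∀ a : R, ∃ r : R, a = r * a ^ 2) ↔
      ∀ (p : Ideal R) (hp : p.IsPrime), IsUSVonNeumannRegular (@Ideal.primeCompl R _ p hp)) ∧
    ((∀ a : R, ∃ r : R, a = r * a ^ 2) ↔
      ∀ (m : Ideal R) (hm : m.IsMaximal),
        IsUSVonNeumannRegular (@Ideal.primeCompl R _ m hm.isPrime)) := by
  constructor
  · exact ⟨fun h p hp => usvnr_of_vnr h _, fun h => vnr_of_usvnr_max (fun m hm => h m hm.isPrime)⟩
  · exact ⟨fun h m hm => usvnr_of_vnr h _, vnr_of_usvnr_max⟩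
end
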